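/- arXiv:1611.06899 — 4 statements merged into one kernel-verified Lean document; each statement's English description precedes it below -/
import Mathlib

section
/- Let k be an even integer and let s, w ∈ ℂ satisfy 2 < Re(s) < k−2, Re(w) < Re(s)−1 and Re(w) < k−1−Re(s). Then for every z in the upper half-plane ℍ the double series 𝓔_{s,k−s}(z,w) = Σ_{γ,δ ∈ B∖Γ, c_{γδ⁻¹}>0} (c_{γδ⁻¹})^{w−1} (j(γ,z)/j(δ,z))^{−s} j(δ,z)^{−k} converges absolutely, i.e. the family of its terms (indexed by pairs of cosets Bγ, Bδ with c_{γδ⁻¹} > 0) is summable. -/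
/-! A coset `Bγ` is determined by the bottom row `(c, d)` of `γ`, and `|j(γ,z)| ≥ r(z)‖(c, d)‖`,
so `Σ_{Bγ ∈ B∖Γ} |j(γ,z)| ^ (-t)` converges for `t > 2`, as for the classical Eisenstein series.
The identity `Im (j(γ,z) · conj j(δ,z)) = c_{γδ⁻¹} Im z` gives
`c_{γδ⁻¹} ≤ |j(γ,z)| |j(δ,z)| / Im z`, and `|u ^ (-s)| ≤ |u| ^ (-Re s) e^{π |Im s|}` for the
principal branch. Hence, with `a = max (Re w - 1) 0`, the summand is at most a constant times
`|j(γ,z)| ^ (-(Re s - a)) |j(δ,z)| ^ (-(k - Re s - a))`, and the hypotheses say exactly that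
both exponents exceed `2`. -/

open Complex Matrix MatrixGroups

noncomputable section

/-- `Γ = SL₂(ℤ)`. -/
abbrev SL2Z := Matrix.SpecialLinearGroup (Fin 2) ℤ

/-- `j(γ, z) = c z + d`. -/
def jc (g : SL2Z) (z : ℂ) : ℂ := (g.1 1 0 : ℂ) * z + (g.1 1 1 : ℂ)

/-- `c_γ`, the lower-left entry of `γ`. -/
def cEnt (g : SL2Z) : ℤ := g.1 1 0

/-- The subgroup `B = {(1 n; 0 1) : n ∈ ℤ}`, i.e. the powers of `T = (1 1; 0 1)`. -/
def Bsub : Subgroup SL2Z := Subgroup.zpowers ModularGroup.T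

/-- The set of left cosets `Bγ`, i.e. `B∖Γ`. -/
abbrev BCoset := Quotient (QuotientGroup.rightRel Bsub)

/-- The summand of the double Eisenstein series `𝓔_{s,k-s}(z,w)`, evaluated on a pair of
cosets `(Bγ, Bδ)` via chosen representatives (it is well defined on such cosets).
All complex powers are principal-branch powers. -/
def dblSummand (k : ℤ) (s w : ℂ) (z : ℂ) (p : BCoset × BCoset) : ℂ :=
  ((cEnt (p.1.out * p.2.out⁻¹) : ℂ)) ^ (w - 1) *
    (jc p.1.out z / jc p.2.out z) ^ (-s) * (jc p.2.out z) ^ (-(k : ℂ))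

open ModularGroup EisensteinSeries
open scoped UpperHalfPlane ComplexConjugate Real

lemma cEnt_mul_inv (g h : SL2Z) : cEnt (g * h⁻¹) = g 1 0 * h 1 1 - g 1 1 * h 1 0 := by
  simp only [cEnt, Fin.isValue, Matrix.SpecialLinearGroup.coe_mul,
    Matrix.SpecialLinearGroup.coe_inv, adjugate_fin_two, mul_apply, of_apply, cons_val',
    cons_val_zero, cons_val_fin_one, Fin.sum_univ_two, cons_val_one, mul_neg]
  ring

lemma mem_Bsub_of_apply_one {g : SL2Z} (hc : g 1 0 = 0) (hd : g 1 1 = 1) : g ∈ Bsub := by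
  have hdet := g.det_coe
  rw [det_fin_two, hc, hd] at hdet
  have ha : g 0 0 = 1 := by linarith
  refine ⟨g 0 1, ?_⟩
  ext i j
  fin_cases i <;> fin_cases j <;> simp [coe_T_zpow, ha, hc, hd]

lemma bottomRow_out_injective :
    Function.Injective fun p : BCoset => (p.out : Matrix (Fin 2) (Fin 2) ℤ) 1 := by
  intro p q hpq
  simp only at hpq
  have hrow : ((q.out * p.out⁻¹ : SL2Z) : Matrix (Fin 2) (Fin 2) ℤ) 1 = (1 : SL2Z) 1 := by
    rw [← mul_inv_cancel p.out]
    exact congrArg (· ᵥ* (p.out⁻¹ : SL2Z).1) hpq.symm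
  refine Quotient.out_equiv_out.1 (QuotientGroup.rightRel_apply.2 (mem_Bsub_of_apply_one ?_ ?_))
  · simpa using congrFun hrow 0
  · simpa using congrFun hrow 1

lemma im_jc_mul_conj_jc (g h : SL2Z) (z : ℂ) :
    (jc g z * conj (jc h z)).im = cEnt (g * h⁻¹) * z.im := by
  rw [cEnt_mul_inv]
  simp only [jc, Fin.isValue, map_add, map_mul, map_intCast, mul_im, add_re, mul_re, intCast_re,
    intCast_im, zero_mul, sub_zero, add_im, conj_im, mul_neg, conj_re, add_zero, neg_zero,
    Int.cast_sub, Int.cast_mul]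
  ring

lemma cEnt_mul_inv_mul_im_le (g h : SL2Z) (z : ℂ) :
    (cEnt (g * h⁻¹) : ℝ) * z.im ≤ ‖jc g z‖ * ‖jc h z‖ := by
  rw [← im_jc_mul_conj_jc, ← norm_conj (jc h z), ← norm_mul]
  exact (le_abs_self _).trans (abs_im_le_norm _)

lemma r_mul_norm_le_norm_jc (g : SL2Z) (z : ℍ) :
    r z * ‖(g : Matrix (Fin 2) (Fin 2) ℤ) 1‖ ≤ ‖jc g z‖ :=
  r_mul_max_le z (SpecialLinearGroup.row_ne_zero g 1)

lemma norm_jc_pos (g : SL2Z) (z : ℍ) : 0 < ‖jc g z‖ :=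
  (mul_pos (r_pos z) (norm_pos_iff.2 (SpecialLinearGroup.row_ne_zero g 1))).trans_le
    (r_mul_norm_le_norm_jc g z)

lemma summable_norm_jc_rpow_neg {t : ℝ} (ht : 2 < t) (z : ℍ) :
    Summable fun p : BCoset => ‖jc p.out z‖ ^ (-t) := by
  refine (((summable_one_div_norm_rpow ht).comp_injective bottomRow_out_injective).mul_left
    (r z ^ (-t))).of_nonneg_of_le (fun p => by positivity) fun p => ?_
  rw [Function.comp_apply, ← Real.mul_rpow (r_pos z).le (norm_nonneg _)]
  exact Real.rpow_le_rpow_of_nonpos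
    (mul_pos (r_pos z) (norm_pos_iff.2 (SpecialLinearGroup.row_ne_zero _ 1)))
    (r_mul_norm_le_norm_jc _ z) (by linarith)

lemma norm_cpow_le_rpow_mul_exp (x y : ℂ) :
    ‖x ^ y‖ ≤ ‖x‖ ^ y.re * Real.exp (π * |y.im|) := by
  refine (norm_cpow_le x y).trans ?_
  rw [div_eq_mul_inv, ← Real.exp_neg]
  gcongr
  calc -(arg x * y.im) ≤ |arg x| * |y.im| := abs_mul (arg x) y.im ▸ neg_le_abs _
    _ ≤ π * |y.im| := by gcongr; exact abs_arg_le_pi x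

lemma norm_dblSummand_le {k : ℤ} {s w z : ℂ} (hz : 0 < z.im) {a : ℝ} (ha : 0 ≤ a)
    (hwa : w.re - 1 ≤ a) {p : BCoset × BCoset} (hp : 0 < cEnt (p.1.out * p.2.out⁻¹)) :
    ‖dblSummand k s w z p‖ ≤ Real.exp (π * |s.im|) * z.im ^ (-a) *
      (‖jc p.1.out z‖ ^ (-(s.re - a)) * ‖jc p.2.out z‖ ^ (-(k - s.re - a))) := by
  set c := cEnt (p.1.out * p.2.out⁻¹)
  set J₁ := ‖jc p.1.out z‖
  set J₂ := ‖jc p.2.out z‖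
  have hJ₁ : 0 < J₁ := norm_jc_pos _ ⟨z, hz⟩
  have hJ₂ : 0 < J₂ := norm_jc_pos _ ⟨z, hz⟩
  have hc : (1 : ℝ) ≤ c := by exact_mod_cast hp
  have hcJ : (c : ℝ) ≤ J₁ * J₂ / z.im :=
    (le_div_iff₀ hz).2 (cEnt_mul_inv_mul_im_le p.1.out p.2.out z)
  have hpow_c : ‖(c : ℂ) ^ (w - 1)‖ ≤ (J₁ * J₂ / z.im) ^ a := by
    rw [← ofReal_intCast, norm_cpow_eq_rpow_re_of_pos (by linarith)]
    calc (c : ℝ) ^ (w - 1).re ≤ (c : ℝ) ^ a :=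
          Real.rpow_le_rpow_of_exponent_le hc (by rw [sub_re, one_re]; linarith)
      _ ≤ _ := Real.rpow_le_rpow (by linarith) hcJ ha
  have hpow_ratio : ‖(jc p.1.out z / jc p.2.out z) ^ (-s)‖ ≤
      (J₁ / J₂) ^ (-s.re) * Real.exp (π * |s.im|) := by
    simpa [J₁, J₂] using norm_cpow_le_rpow_mul_exp (jc p.1.out z / jc p.2.out z) (-s)
  have hpow_k : ‖jc p.2.out z ^ (-(k : ℂ))‖ ≤ J₂ ^ (-(k : ℝ)) := by
    simpa [J₂] using norm_cpow_le_rpow_mul_exp (jc p.2.out z) (-(k : ℂ))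
  calc ‖dblSummand k s w z p‖
      = ‖(c : ℂ) ^ (w - 1)‖ * ‖(jc p.1.out z / jc p.2.out z) ^ (-s)‖ *
          ‖jc p.2.out z ^ (-(k : ℂ))‖ := by simp [dblSummand, c]
    _ ≤ (J₁ * J₂ / z.im) ^ a * ((J₁ / J₂) ^ (-s.re) * Real.exp (π * |s.im|)) *
          J₂ ^ (-(k : ℝ)) := by gcongr
    _ = Real.exp (π * |s.im|) *
          ((J₁ * J₂ / z.im) ^ a * (J₁ / J₂) ^ (-s.re) * J₂ ^ (-(k : ℝ))) := by ring
    _ = _ := by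
        rw [show -(s.re - a) = a + -s.re by ring, show -(k - s.re - a) = a + s.re + -k by ring,
          Real.rpow_add hJ₁, Real.rpow_add hJ₂, Real.rpow_add hJ₂,
          Real.div_rpow (by positivity) hz.le, Real.mul_rpow hJ₁.le hJ₂.le,
          Real.div_rpow hJ₁.le hJ₂.le, Real.rpow_neg hz.le, Real.rpow_neg hJ₂.le s.re,
          Real.rpow_neg hJ₁.le]
        have : 0 < J₂ ^ s.re := by positivity
        field_simp

theorem dblEisenstein_summable_general (k : ℤ) (s w : ℂ)
    (hs1 : 2 < s.re) (hs2 : s.re < (k : ℝ) - 2)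
    (hw1 : w.re < s.re - 1) (hw2 : w.re < (k : ℝ) - 1 - s.re)
    (z : ℂ) (hz : 0 < z.im) :
    Summable (fun p : {p : BCoset × BCoset // 0 < cEnt (p.1.out * p.2.out⁻¹)} =>
      dblSummand k s w z p.1) := by
  set a := max (w.re - 1) 0
  have ha₁ : a < s.re - 2 := max_lt (by linarith) (by linarith)
  have ha₂ : a < k - s.re - 2 := max_lt (by linarith) (by linarith)
  have hmajorant :=
    (summable_norm_jc_rpow_neg (by linarith : 2 < s.re - a) ⟨z, hz⟩).mul_of_nonneg
      (summable_norm_jc_rpow_neg (by linarith : 2 < k - s.re - a) ⟨z, hz⟩)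
      (fun _ => by positivity) (fun _ => by positivity)
  exact ((hmajorant.mul_left _).comp_injective Subtype.val_injective).of_norm_bounded
    fun p => norm_dblSummand_le hz (le_max_right _ _) (le_max_left _ _) p.2

/-- absolute convergence of the double Eisenstein series
`𝓔_{s,k-s}(z,w)` in the range `2 < Re s < k - 2`, `Re w < Re s - 1`, `Re w < k - 1 - Re s`:
the family of its terms, indexed by the pairs of cosets with `c_{γδ⁻¹} > 0`, is summable. -/
theorem dblEisenstein_summable (k : ℤ) (hk : Even k) (s w : ℂ)
    (hs1 : 2 < s.re) (hs2 : s.re < (k : ℝ) - 2)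
    (hw1 : w.re < s.re - 1) (hw2 : w.re < (k : ℝ) - 1 - s.re)
    (z : ℂ) (hz : 0 < z.im) :
    Summable (fun p : {p : BCoset × BCoset // 0 < cEnt (p.1.out * p.2.out⁻¹)} =>
      dblSummand k s w z p.1) :=
  dblEisenstein_summable_general k s w hs1 hs2 hw1 hw2 z hz

end
end

section
/- Let k be an even integer, a, r integers, l ≥ 1 and s ≥ 1 integers, let J = {j ∈ ℤ : k/2 − a ≤ j ≤ s − 1 + k/2 + r − a}, and let (α_j)_{j∈J} be arbitrary complex numbers. Then there exists T ∈ ℝ such that for all t ∈ ℂ with Re(t) > T: ∫₀^∞ Σ_{n≥1} σ_{2s+k+2r−2a−1}(n) n^{−(s+r−a+k/2)} σ_{2a−1}(l+n) (Σ_{j∈J} α_j (4πny)^{−j}) e^{−4π(l+n)y} · y^{a−r−k/2} · y^{t+k+r−2} dy = Σ_{j∈J} α_j (4π)^{1−k/2−a−t} Γ(k/2 + a − j − 1 + t) Σ_{n≥1} σ_{2s+k+2r−2a−1}(n) σ_{2a−1}(l+n) / ( n^{s+r−a+k/2+j} (n+l)^{k/2+a−j−1+t} ), with the integral and all series absolutely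 convergent. -/
open Complex MeasureTheory Set Filter
open scoped Real

noncomputable section

def sigmaC (w : ℂ) (n : ℕ) : ℂ := ∑ d ∈ n.divisors, (d : ℂ) ^ w

lemma sigmaC_norm_le (w : ℂ) (K : ℕ) (hw : w.re ≤ K) (n : ℕ) :
    ‖sigmaC w n‖ ≤ (n : ℝ) ^ (K + 1) := by
  rcases Nat.eq_zero_or_pos n with rfl | hn
  · simp [sigmaC]
  have hcard : (n.divisors.card : ℝ) ≤ n := by
    have : n.divisors ⊆ Finset.Icc 1 n := by
      intro d hd
      rw [Finset.mem_Icc]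
      exact ⟨Nat.pos_of_mem_divisors hd, Nat.le_of_dvd hn (Nat.dvd_of_mem_divisors hd)⟩
    have := Finset.card_le_card this
    rw [Nat.card_Icc] at this
    exact_mod_cast this.trans (by omega)
  calc ‖sigmaC w n‖ ≤ ∑ d ∈ n.divisors, ‖(d : ℂ) ^ w‖ := norm_sum_le _ _
    _ ≤ ∑ _d ∈ n.divisors, (n : ℝ) ^ K := by
        refine Finset.sum_le_sum fun d hd => ?_
        have hd1 : 1 ≤ d := Nat.pos_of_mem_divisors hd
        have hdn : d ≤ n := Nat.le_of_dvd hn (Nat.dvd_of_mem_divisors hd)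
        have hdpos : (0 : ℝ) < d := by exact_mod_cast hd1
        rw [show ((d : ℕ) : ℂ) = ((d : ℝ) : ℂ) by push_cast; ring,
          Complex.norm_cpow_eq_rpow_re_of_pos hdpos]
        calc (d : ℝ) ^ w.re ≤ (d : ℝ) ^ (K : ℝ) :=
              Real.rpow_le_rpow_of_exponent_le (by exact_mod_cast hd1) hw
          _ = (d : ℝ) ^ K := Real.rpow_natCast _ _
          _ ≤ (n : ℝ) ^ K := pow_le_pow_left₀ hdpos.le (by exact_mod_cast hdn) K
    _ = (n.divisors.card : ℝ) * (n : ℝ) ^ K := by rw [Finset.sum_const, nsmul_eq_mul]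
    _ ≤ (n : ℝ) * (n : ℝ) ^ K := by
        have : (0:ℝ) ≤ (n : ℝ) ^ K := by positivity
        nlinarith
    _ = (n : ℝ) ^ (K + 1) := by ring


lemma shifted_rpow_summable : Summable (fun n : ℕ => ((n : ℝ) + 1) ^ (-2 : ℝ)) := by
  have h := (Real.summable_nat_rpow (p := (-2 : ℝ))).2 (by norm_num)
  have h2 := (summable_nat_add_iff 1).2 h
  refine h2.congr fun n => ?_
  push_cast
  ring_nf

lemma key_summable {D : ℝ} (hD : 0 ≤ D) (K : ℕ) (c : ℕ → ℂ)
    (hc : ∀ n, ‖c n‖ ≤ D * ((n : ℝ) + 1) ^ K) {lR x : ℝ} (hlR : 0 ≤ lR)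
    (hx : (K : ℝ) + 2 ≤ x) :
    Summable (fun n : ℕ => ‖c n‖ * (((n : ℝ) + 1) + lR) ^ (-x)) := by
  have hK0 : (0:ℝ) ≤ (K : ℝ) := Nat.cast_nonneg K
  have hxpos : 0 < x := by linarith
  refine Summable.of_nonneg_of_le (fun n => by positivity) (fun n => ?_)
    ((shifted_rpow_summable.mul_left D))
  have hn1 : (0:ℝ) < (n : ℝ) + 1 := by positivity
  have h1 : (((n : ℝ) + 1) + lR) ^ (-x) ≤ ((n : ℝ) + 1) ^ (-x) := by
    rw [Real.rpow_neg (by linarith), Real.rpow_neg hn1.le]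
    have hbase : ((n : ℝ) + 1) ^ x ≤ (((n : ℝ) + 1) + lR) ^ x :=
      Real.rpow_le_rpow hn1.le (by linarith) hxpos.le
    have hp : (0:ℝ) < ((n : ℝ) + 1) ^ x := Real.rpow_pos_of_pos hn1 x
    exact inv_anti₀ hp hbase
  calc ‖c n‖ * (((n : ℝ) + 1) + lR) ^ (-x)
      ≤ (D * ((n : ℝ) + 1) ^ K) * ((n : ℝ) + 1) ^ (-x) := by
        refine mul_le_mul (hc n) h1 (by positivity) (by positivity)
    _ = D * ((n : ℝ) + 1) ^ ((K : ℝ) + -x) := by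
        rw [Real.rpow_add hn1, Real.rpow_natCast]; ring
    _ ≤ D * ((n : ℝ) + 1) ^ (-2 : ℝ) := by
        refine mul_le_mul_of_nonneg_left ?_ hD
        exact Real.rpow_le_rpow_of_exponent_le (by linarith) (by linarith)

lemma key_summable_exp {D : ℝ} (K : ℕ) {ρ : ℝ} (h0 : 0 ≤ ρ) (h1 : ρ < 1) :
    Summable (fun n : ℕ => D * ((n : ℝ) + 1) ^ K * ρ ^ (n + 1)) := by
  have h := summable_pow_mul_geometric_of_norm_lt_one (R := ℝ) K
    (r := ρ) (by rwa [Real.norm_eq_abs, _root_.abs_of_nonneg h0])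
  have h2 := (summable_nat_add_iff 1).2 h
  refine (h2.mul_left D).congr fun n => ?_
  push_cast
  ring

lemma pointwiseA (u v E : ℂ) {x : ℂ} (hx : x ≠ 0) (P : ℂ) (j m1 : ℤ) (w cpar : ℂ)
    (hex : ((m1 - j : ℤ) : ℂ) + w = cpar - 1) :
    u * (v * (P * x) ^ (-j)) * E * x ^ m1 * x ^ w
      = (u * v * P ^ (-j)) * (x ^ (cpar - 1) * E) := by
  rw [mul_zpow]
  have e1 : x ^ (-j) * x ^ m1 = x ^ (m1 - j) := by
    rw [← zpow_add₀ hx]; congr 1; ring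
  have e2 : x ^ (m1 - j) = x ^ (((m1 - j : ℤ) : ℂ)) := (Complex.cpow_intCast x _).symm
  have e3 : x ^ (((m1 - j : ℤ) : ℂ)) * x ^ w = x ^ ((((m1 - j : ℤ) : ℂ)) + w) :=
    (Complex.cpow_add _ _ hx).symm
  calc u * (v * (P ^ (-j) * x ^ (-j))) * E * x ^ m1 * x ^ w
      = (u * v * P ^ (-j)) * (((x ^ (-j) * x ^ m1) * x ^ w) * E) := by ring
    _ = (u * v * P ^ (-j)) * (x ^ (cpar - 1) * E) := by rw [e1, e2, e3, hex]

lemma pointwiseB {N P4 : ℂ} (hN : N ≠ 0) (NL S1 S2 v Γv Cpar c0 : ℂ) (p j : ℤ)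
    (hc0 : P4 ^ (-j) * P4 ^ (-Cpar) = P4 ^ c0) :
    (S1 * N ^ (-p) * S2 * v * (P4 * N) ^ (-j)) * ((P4 ^ (-Cpar) * NL ^ (-Cpar)) * Γv)
      = v * P4 ^ c0 * Γv * (S1 * S2 / (N ^ (p + j) * NL ^ Cpar)) := by
  rw [mul_zpow, cpow_neg NL]
  have e1 : N ^ (-p) * N ^ (-j) = (N ^ (p + j))⁻¹ := by
    rw [← zpow_add₀ hN, ← zpow_neg]; congr 1; ring
  calc (S1 * N ^ (-p) * S2 * v * (P4 ^ (-j) * N ^ (-j))) * ((P4 ^ (-Cpar) * (NL ^ Cpar)⁻¹) * Γv)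
      = (P4 ^ (-j) * P4 ^ (-Cpar)) * Γv * (S1 * S2 * v * ((N ^ (-p) * N ^ (-j)) * (NL ^ Cpar)⁻¹)) := by
        ring
    _ = v * P4 ^ c0 * Γv * (S1 * S2 / (N ^ (p + j) * NL ^ Cpar)) := by
        rw [e1, hc0]; field_simp

lemma aux_norm {c : ℂ} {B : ℝ} {y : ℝ} (hy : 0 < y) :
    ‖(y : ℂ) ^ (c - 1) * Complex.exp (-(↑B * ↑y))‖ = y ^ (c.re - 1) * Real.exp (-(B * y)) := by
  have h1 : ‖(y : ℂ) ^ (c - 1)‖ = y ^ (c.re - 1) := by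
    rw [Complex.norm_cpow_eq_rpow_re_of_pos hy]
    norm_num [Complex.sub_re]
  have h2 : ‖Complex.exp (-(↑B * ↑y))‖ = Real.exp (-(B * y)) := by
    rw [Complex.norm_exp]
    congr 1
    simp [Complex.mul_re]
  rw [norm_mul, h1, h2]

lemma aux_int {c : ℂ} (hc : 0 < c.re) {B : ℝ} (hB : 0 < B) :
    IntegrableOn (fun y : ℝ => (y : ℂ) ^ (c - 1) * Complex.exp (-(↑B * ↑y))) (Ioi 0) := by
  have h := Complex.GammaIntegral_convergent hc
  rw [← mul_zero B, ← integrableOn_Ioi_comp_mul_left_iff _ _ hB] at h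
  refine (IntegrableOn.congr_fun (h.const_mul (1 / (B : ℂ) ^ (c - 1)))
    (fun t (ht : 0 < t) => ?_) measurableSet_Ioi)
  have hBy := mul_cpow_ofReal_nonneg hB.le ht.le (c - 1)
  have hBne : (B : ℂ) ^ (c - 1) ≠ 0 := by
    rw [Ne, cpow_eq_zero_iff, not_and_or]
    exact Or.inl (ofReal_ne_zero.mpr hB.ne')
  show 1 / (B : ℂ) ^ (c - 1) * (↑(Real.exp (-(B * t))) * ((B * t : ℝ) : ℂ) ^ (c - 1))
      = (t : ℂ) ^ (c - 1) * Complex.exp (-(↑B * ↑t))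
  rw [show ((B * t : ℝ) : ℂ) = ↑B * ↑t by push_cast; ring, hBy,
    show ((Real.exp (-(B * t)) : ℝ) : ℂ) = Complex.exp (-(↑B * ↑t)) by
      rw [Complex.ofReal_exp]; push_cast; ring_nf]
  field_simp

lemma aux_intval {c : ℂ} (hc : 0 < c.re) {B : ℝ} (hB : 0 < B) :
    ∫ y in Ioi (0:ℝ), (y : ℂ) ^ (c - 1) * Complex.exp (-(↑B * ↑y))
      = (B : ℂ) ^ (-c) * Complex.Gamma c := by
  rw [integral_cpow_mul_exp_neg_mul_Ioi hc hB, one_div,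
    inv_cpow _ _ (by rw [arg_ofReal_of_nonneg hB.le]; exact Real.pi_ne_zero.symm), cpow_neg]

lemma aux_normint {c : ℂ} (hc : 0 < c.re) {B : ℝ} (hB : 0 < B) :
    ∫ y in Ioi (0:ℝ), ‖(y : ℂ) ^ (c - 1) * Complex.exp (-(↑B * ↑y))‖
      = B ^ (-c.re) * Real.Gamma c.re := by
  rw [setIntegral_congr_fun measurableSet_Ioi (fun y (hy : 0 < y) => aux_norm hy),
    Real.integral_rpow_mul_exp_neg_mul_Ioi hc hB, one_div, Real.rpow_neg hB.le, Real.inv_rpow hB.le]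

theorem core (J : Finset ℤ) (c : ℕ → ℤ → ℂ) (Cj : ℤ → ℂ) (B : ℕ → ℝ)
    (hBpos : ∀ n, 0 < B n)
    (hC : ∀ j ∈ J, 0 < (Cj j).re)
    (hsum1 : ∀ j ∈ J, Summable fun n : ℕ => ‖c n j‖ * (B n) ^ (-(Cj j).re))
    (hsum2 : ∀ y : ℝ, 0 < y → ∀ j ∈ J,
      Summable fun n : ℕ => ‖c n j‖ * Real.exp (-(B n * y))) :
    (∀ y : ℝ, 0 < y → Summable fun n : ℕ =>
      ∑ j ∈ J, c n j * ((y:ℂ) ^ (Cj j - 1) * Complex.exp (-(↑(B n) * ↑y)))) ∧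
    (∀ y : ℝ, 0 < y → Summable fun n : ℕ =>
      ‖∑ j ∈ J, c n j * ((y:ℂ) ^ (Cj j - 1) * Complex.exp (-(↑(B n) * ↑y)))‖) ∧
    IntegrableOn (fun y : ℝ => ∑' n : ℕ,
      ∑ j ∈ J, c n j * ((y:ℂ) ^ (Cj j - 1) * Complex.exp (-(↑(B n) * ↑y)))) (Set.Ioi 0) ∧
    (∫ y in Set.Ioi (0:ℝ), ∑' n : ℕ,
      ∑ j ∈ J, c n j * ((y:ℂ) ^ (Cj j - 1) * Complex.exp (-(↑(B n) * ↑y))))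
      = ∑ j ∈ J, ∑' n : ℕ, c n j * ((B n : ℂ) ^ (-(Cj j)) * Complex.Gamma (Cj j)) := by
  have hgint : ∀ j ∈ J, ∀ n : ℕ, Integrable
      (fun y : ℝ => c n j * ((y:ℂ) ^ (Cj j - 1) * Complex.exp (-(↑(B n) * ↑y))))
      (volume.restrict (Ioi 0)) :=
    fun j hj n => (aux_int (hC j hj) (hBpos n)).const_mul (c n j)
  have hgnorm : ∀ j ∈ J, ∀ n : ℕ,
      (∫ y in Ioi (0:ℝ), ‖c n j * ((y:ℂ) ^ (Cj j - 1) * Complex.exp (-(↑(B n) * ↑y)))‖)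
        = ‖c n j‖ * ((B n) ^ (-(Cj j).re) * Real.Gamma ((Cj j).re)) := by
    intro j hj n
    simp_rw [norm_mul (c n j)]
    rw [MeasureTheory.integral_const_mul, aux_normint (hC j hj) (hBpos n)]
  have hsumnorm : ∀ j ∈ J, Summable (fun n : ℕ =>
      ∫ y in Ioi (0:ℝ), ‖c n j * ((y:ℂ) ^ (Cj j - 1) * Complex.exp (-(↑(B n) * ↑y)))‖) := by
    intro j hj
    refine (((hsum1 j hj).mul_right (Real.Gamma (Cj j).re)).congr fun n => ?_)
    rw [hgnorm j hj n]; ring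
  have hGint : ∀ n : ℕ, Integrable
      (fun y : ℝ => ∑ j ∈ J, c n j * ((y:ℂ) ^ (Cj j - 1) * Complex.exp (-(↑(B n) * ↑y))))
      (volume.restrict (Ioi 0)) :=
    fun n => integrable_finset_sum J (fun j hj => hgint j hj n)
  have hGnormle : ∀ n : ℕ,
      (∫ y in Ioi (0:ℝ), ‖∑ j ∈ J, c n j * ((y:ℂ) ^ (Cj j - 1) * Complex.exp (-(↑(B n) * ↑y)))‖)
        ≤ ∑ j ∈ J, ∫ y in Ioi (0:ℝ),
            ‖c n j * ((y:ℂ) ^ (Cj j - 1) * Complex.exp (-(↑(B n) * ↑y)))‖ := by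
    intro n
    calc (∫ y in Ioi (0:ℝ), ‖∑ j ∈ J, c n j * ((y:ℂ) ^ (Cj j - 1) * Complex.exp (-(↑(B n) * ↑y)))‖)
        ≤ ∫ y in Ioi (0:ℝ), ∑ j ∈ J,
            ‖c n j * ((y:ℂ) ^ (Cj j - 1) * Complex.exp (-(↑(B n) * ↑y)))‖ :=
          integral_mono ((hGint n).norm)
            (integrable_finset_sum J fun j hj => (hgint j hj n).norm)
            (fun y => norm_sum_le _ _)
      _ = _ := integral_finset_sum J (fun j hj => (hgint j hj n).norm)
  have hFnormsum : Summable (fun n : ℕ =>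
      ∫ y in Ioi (0:ℝ), ‖∑ j ∈ J, c n j * ((y:ℂ) ^ (Cj j - 1) * Complex.exp (-(↑(B n) * ↑y)))‖) :=
    Summable.of_nonneg_of_le (fun n => integral_nonneg fun y => norm_nonneg _) hGnormle
      (summable_sum (fun j hj => hsumnorm j hj))
  have hHS := MeasureTheory.hasSum_integral_of_summable_integral_norm
    (μ := volume.restrict (Ioi (0:ℝ)))
    (F := fun n (y:ℝ) => ∑ j ∈ J, c n j * ((y:ℂ) ^ (Cj j - 1) * Complex.exp (-(↑(B n) * ↑y))))
    hGint hFnormsum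
  have hgysum : ∀ y : ℝ, 0 < y → ∀ j ∈ J, Summable fun n : ℕ =>
      ‖c n j * ((y:ℂ) ^ (Cj j - 1) * Complex.exp (-(↑(B n) * ↑y)))‖ := by
    intro y hy j hj
    refine ((hsum2 y hy j hj).mul_left (y ^ ((Cj j).re - 1))).congr fun n => ?_
    rw [norm_mul, aux_norm hy]; ring
  have partA : ∀ y : ℝ, 0 < y → Summable fun n : ℕ =>
      ∑ j ∈ J, c n j * ((y:ℂ) ^ (Cj j - 1) * Complex.exp (-(↑(B n) * ↑y))) := by
    intro y hy
    exact summable_sum (fun j hj => Summable.of_norm (hgysum y hy j hj))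
  have partA' : ∀ y : ℝ, 0 < y → Summable fun n : ℕ =>
      ‖∑ j ∈ J, c n j * ((y:ℂ) ^ (Cj j - 1) * Complex.exp (-(↑(B n) * ↑y)))‖ := by
    intro y hy
    exact Summable.of_nonneg_of_le (fun n => norm_nonneg _) (fun n => norm_sum_le _ _)
      (summable_sum (fun j hj => hgysum y hy j hj))
  refine ⟨partA, partA', ⟨?_, ?_⟩, ?_⟩
  · -- AEStronglyMeasurable
    refine aestronglyMeasurable_of_tendsto_ae atTop
      (f := fun (N:ℕ) (y:ℝ) => ∑ n ∈ Finset.range N,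
        ∑ j ∈ J, c n j * ((y:ℂ) ^ (Cj j - 1) * Complex.exp (-(↑(B n) * ↑y))))
      (fun N => (integrable_finset_sum _ (fun n _ => hGint n)).aestronglyMeasurable) ?_
    filter_upwards [ae_restrict_mem measurableSet_Ioi] with y hy
    exact (partA y hy).hasSum.tendsto_sum_nat
  · -- HasFiniteIntegral
    refine lt_of_le_of_lt ?_ (ENNReal.ofReal_lt_top
      (r := ∑' n : ℕ, ∫ y in Ioi (0:ℝ),
        ‖∑ j ∈ J, c n j * ((y:ℂ) ^ (Cj j - 1) * Complex.exp (-(↑(B n) * ↑y)))‖))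
    calc ∫⁻ (y:ℝ), ‖∑' n : ℕ, ∑ j ∈ J, c n j * ((y:ℂ) ^ (Cj j - 1) *
            Complex.exp (-(↑(B n) * ↑y)))‖ₑ ∂(volume.restrict (Ioi 0))
        ≤ ∫⁻ (y:ℝ), ∑' n : ℕ, ‖∑ j ∈ J, c n j * ((y:ℂ) ^ (Cj j - 1) *
            Complex.exp (-(↑(B n) * ↑y)))‖ₑ ∂(volume.restrict (Ioi 0)) := by
          refine lintegral_mono_ae ?_
          filter_upwards [ae_restrict_mem measurableSet_Ioi] with y hy
          rw [← ofReal_norm_eq_enorm]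
          calc ENNReal.ofReal ‖∑' n : ℕ, ∑ j ∈ J, c n j * ((y:ℂ) ^ (Cj j - 1) *
                  Complex.exp (-(↑(B n) * ↑y)))‖
              ≤ ENNReal.ofReal (∑' n : ℕ, ‖∑ j ∈ J, c n j * ((y:ℂ) ^ (Cj j - 1) *
                  Complex.exp (-(↑(B n) * ↑y)))‖) :=
                ENNReal.ofReal_le_ofReal (norm_tsum_le_tsum_norm (partA' y hy))
            _ = ∑' n : ℕ, ENNReal.ofReal ‖∑ j ∈ J, c n j * ((y:ℂ) ^ (Cj j - 1) *
                  Complex.exp (-(↑(B n) * ↑y)))‖ :=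
                ENNReal.ofReal_tsum_of_nonneg (fun n => norm_nonneg _) (partA' y hy)
            _ = _ := by simp_rw [ofReal_norm_eq_enorm]
      _ = ∑' n : ℕ, ∫⁻ (y:ℝ), ‖∑ j ∈ J, c n j * ((y:ℂ) ^ (Cj j - 1) *
            Complex.exp (-(↑(B n) * ↑y)))‖ₑ ∂(volume.restrict (Ioi 0)) :=
          lintegral_tsum (fun n => (hGint n).aestronglyMeasurable.enorm)
      _ = ∑' n : ℕ, ENNReal.ofReal (∫ y in Ioi (0:ℝ),
            ‖∑ j ∈ J, c n j * ((y:ℂ) ^ (Cj j - 1) * Complex.exp (-(↑(B n) * ↑y)))‖) := by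
          refine tsum_congr fun n => ?_
          exact (ofReal_integral_norm_eq_lintegral_enorm (hGint n)).symm
      _ = ENNReal.ofReal (∑' n : ℕ, ∫ y in Ioi (0:ℝ),
            ‖∑ j ∈ J, c n j * ((y:ℂ) ^ (Cj j - 1) * Complex.exp (-(↑(B n) * ↑y)))‖) :=
          (ENNReal.ofReal_tsum_of_nonneg
            (fun n => integral_nonneg fun y => norm_nonneg _) hFnormsum).symm
  · -- the integral identity
    have h1 := hHS.tsum_eq
    have h2 : ∀ n : ℕ, (∫ y in Ioi (0:ℝ),
        ∑ j ∈ J, c n j * ((y:ℂ) ^ (Cj j - 1) * Complex.exp (-(↑(B n) * ↑y))))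
          = ∑ j ∈ J, c n j * ((B n : ℂ) ^ (-(Cj j)) * Complex.Gamma (Cj j)) := by
      intro n
      rw [integral_finset_sum J (fun j hj => hgint j hj n)]
      refine Finset.sum_congr rfl fun j hj => ?_
      rw [MeasureTheory.integral_const_mul, aux_intval (hC j hj) (hBpos n)]
    have h3 : ∀ j ∈ J, Summable (fun n : ℕ =>
        c n j * ((B n : ℂ) ^ (-(Cj j)) * Complex.Gamma (Cj j))) := by
      intro j hj
      refine Summable.of_norm ((((hsum1 j hj).mul_right ‖Complex.Gamma (Cj j)‖).congr
        fun n => ?_))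
      rw [norm_mul, norm_mul, 
        Complex.norm_cpow_eq_rpow_re_of_pos (hBpos n), Complex.neg_re]
      ring
    rw [← h1, tsum_congr h2, Summable.tsum_finsetSum (fun j hj => h3 j hj)]

set_option maxHeartbeats 2000000 in
/-- term-by-term integration of the shifted-convolution series:
for `Re t` large,
`∫₀^∞ Σ_{n≥1} σ_{2s+k+2r-2a-1}(n) n^{-(s+r-a+k/2)} σ_{2a-1}(l+n) (Σ_{j∈J} α_j (4πny)^{-j})
    e^{-4π(l+n)y} y^{a-r-k/2} y^{t+k+r-2} dy
 = Σ_{j∈J} α_j (4π)^{1-k/2-a-t} Γ(k/2+a-j-1+t)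
    Σ_{n≥1} σ_{2s+k+2r-2a-1}(n) σ_{2a-1}(l+n) / (n^{s+r-a+k/2+j} (n+l)^{k/2+a-j-1+t})`,
with the integral and all series absolutely convergent. -/
theorem shifted_convolution_integral (k : ℤ) (hk : Even k) (a r : ℤ) (l s : ℤ)
    (hl : 1 ≤ l) (hs : 1 ≤ s) (α : ℤ → ℂ) :
    ∃ T : ℝ, ∀ t : ℂ, T < t.re →
      (∀ y : ℝ, 0 < y → Summable (fun n : ℕ =>
        sigmaC ((2 * s + k + 2 * r - 2 * a - 1 : ℤ) : ℂ) (n + 1) *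
          ((n + 1 : ℕ) : ℂ) ^ (-(s + r - a + k / 2)) *
          sigmaC ((2 * a - 1 : ℤ) : ℂ) ((l.toNat + (n + 1))) *
          (∑ j ∈ Finset.Icc (k / 2 - a) (s - 1 + k / 2 + r - a),
            α j * (4 * (π : ℂ) * ((n + 1 : ℕ) : ℂ) * (y : ℂ)) ^ (-j)) *
          Complex.exp (-4 * (π : ℂ) * ((l : ℂ) + ((n + 1 : ℕ) : ℂ)) * (y : ℂ)) *
          (y : ℂ) ^ (a - r - k / 2) * (y : ℂ) ^ (t + (k : ℂ) + (r : ℂ) - 2))) ∧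
      IntegrableOn (fun y : ℝ => ∑' n : ℕ,
        sigmaC ((2 * s + k + 2 * r - 2 * a - 1 : ℤ) : ℂ) (n + 1) *
          ((n + 1 : ℕ) : ℂ) ^ (-(s + r - a + k / 2)) *
          sigmaC ((2 * a - 1 : ℤ) : ℂ) ((l.toNat + (n + 1))) *
          (∑ j ∈ Finset.Icc (k / 2 - a) (s - 1 + k / 2 + r - a),
            α j * (4 * (π : ℂ) * ((n + 1 : ℕ) : ℂ) * (y : ℂ)) ^ (-j)) *
          Complex.exp (-4 * (π : ℂ) * ((l : ℂ) + ((n + 1 : ℕ) : ℂ)) * (y : ℂ)) *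
          (y : ℂ) ^ (a - r - k / 2) * (y : ℂ) ^ (t + (k : ℂ) + (r : ℂ) - 2))
        (Set.Ioi (0 : ℝ)) ∧
      (∀ j ∈ Finset.Icc (k / 2 - a) (s - 1 + k / 2 + r - a), Summable (fun n : ℕ =>
        sigmaC ((2 * s + k + 2 * r - 2 * a - 1 : ℤ) : ℂ) (n + 1) *
          sigmaC ((2 * a - 1 : ℤ) : ℂ) ((l.toNat + (n + 1))) /
          (((n + 1 : ℕ) : ℂ) ^ (s + r - a + k / 2 + j) *
            (((n + 1 : ℕ) : ℂ) + (l : ℂ)) ^ (((k / 2 + a - j - 1 : ℤ) : ℂ) + t)))) ∧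
      (∫ y in Set.Ioi (0 : ℝ), ∑' n : ℕ,
        sigmaC ((2 * s + k + 2 * r - 2 * a - 1 : ℤ) : ℂ) (n + 1) *
          ((n + 1 : ℕ) : ℂ) ^ (-(s + r - a + k / 2)) *
          sigmaC ((2 * a - 1 : ℤ) : ℂ) ((l.toNat + (n + 1))) *
          (∑ j ∈ Finset.Icc (k / 2 - a) (s - 1 + k / 2 + r - a),
            α j * (4 * (π : ℂ) * ((n + 1 : ℕ) : ℂ) * (y : ℂ)) ^ (-j)) *
          Complex.exp (-4 * (π : ℂ) * ((l : ℂ) + ((n + 1 : ℕ) : ℂ)) * (y : ℂ)) *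
          (y : ℂ) ^ (a - r - k / 2) * (y : ℂ) ^ (t + (k : ℂ) + (r : ℂ) - 2)) =
      ∑ j ∈ Finset.Icc (k / 2 - a) (s - 1 + k / 2 + r - a),
        α j * (4 * (π : ℂ)) ^ (((1 - k / 2 - a : ℤ) : ℂ) - t) *
          Complex.Gamma (((k / 2 + a - j - 1 : ℤ) : ℂ) + t) *
          ∑' n : ℕ,
            sigmaC ((2 * s + k + 2 * r - 2 * a - 1 : ℤ) : ℂ) (n + 1) *
              sigmaC ((2 * a - 1 : ℤ) : ℂ) ((l.toNat + (n + 1))) /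
              (((n + 1 : ℕ) : ℂ) ^ (s + r - a + k / 2 + j) *
                (((n + 1 : ℕ) : ℂ) + (l : ℂ)) ^ (((k / 2 + a - j - 1 : ℤ) : ℂ) + t)) := by
  obtain ⟨b, rfl⟩ := hk
  simp only [show (b + b) / 2 = b from by omega]
  -- abbreviations
  set w1 : ℂ := ((2 * s + (b + b) + 2 * r - 2 * a - 1 : ℤ) : ℂ) with hw1_def
  set w2 : ℂ := ((2 * a - 1 : ℤ) : ℂ) with hw2_def
  set J : Finset ℤ := Finset.Icc (b - a) (s - 1 + b + r - a) with hJ_def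
  set K1 : ℕ := (2 * s + (b + b) + 2 * r - 2 * a - 1).toNat with hK1_def
  set K2 : ℕ := (2 * a - 1).toNat with hK2_def
  set Kn : ℤ → ℕ := fun j => (K1 + 1) + (K2 + 1) + (s + r - a + b).natAbs + j.natAbs
    with hKn_def
  set D : ℝ → ℤ → ℝ := fun u j => ((l.toNat : ℝ) + 1) ^ (K2 + 1) * u * (4 * π) ^ (-j)
    with hD_def
  set Tn : ℕ := J.sup (fun j => ((Kn j : ℤ) + 2 - (b + a - j - 1)).toNat) with hTn_def
  refine ⟨(Tn : ℝ), fun t ht => ?_⟩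
  have hl1 : (1 : ℝ) ≤ (l : ℝ) := by exact_mod_cast hl
  have hlnat : ((l.toNat : ℤ)) = l := Int.toNat_of_nonneg (by omega)
  -- basic positivity
  have hπ : (0 : ℝ) < π := Real.pi_pos
  have hBpos : ∀ n : ℕ, 0 < 4 * π * ((n : ℝ) + 1 + (l : ℝ)) := by
    intro n
    have : (0:ℝ) ≤ (n : ℝ) := Nat.cast_nonneg n
    nlinarith
  -- threshold estimates
  have hxj : ∀ j ∈ J, (Kn j : ℝ) + 2 ≤ ((b + a - j - 1 : ℤ) : ℝ) + t.re := by
    intro j hj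
    have h1 : ((Kn j : ℤ) + 2 - (b + a - j - 1)) ≤ (Tn : ℤ) := by
      refine le_trans (Int.self_le_toNat _) ?_
      rw [hTn_def]
      exact_mod_cast Finset.le_sup (f := fun j => ((Kn j : ℤ) + 2 - (b + a - j - 1)).toNat) hj
    have h2 : (((Kn j : ℤ) + 2 - (b + a - j - 1) : ℤ) : ℝ) ≤ (Tn : ℝ) := by exact_mod_cast h1
    push_cast at h2 ⊢
    linarith
  have hCre : ∀ j : ℤ, ((((b + a - j - 1 : ℤ) : ℂ)) + t).re = ((b + a - j - 1 : ℤ) : ℝ) + t.re := by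
    intro j
    simp
  have hCpos : ∀ j ∈ J, 0 < ((((b + a - j - 1 : ℤ) : ℂ)) + t).re := by
    intro j hj
    rw [hCre j]
    have := hxj j hj
    have hKn0 : (0:ℝ) ≤ (Kn j : ℝ) := Nat.cast_nonneg _
    linarith
  -- norm bounds for the coefficients
  have hw1K : w1.re ≤ (K1 : ℝ) := by
    rw [hw1_def, Complex.intCast_re]
    exact_mod_cast Int.self_le_toNat _
  have hw2K : w2.re ≤ (K2 : ℝ) := by
    rw [hw2_def, Complex.intCast_re]
    exact_mod_cast Int.self_le_toNat _
  have hS1 : ∀ n : ℕ, ‖sigmaC w1 (n + 1)‖ ≤ ((n : ℝ) + 1) ^ (K1 + 1) := by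
    intro n
    have := sigmaC_norm_le w1 K1 hw1K (n + 1)
    rwa [show (((n+1 : ℕ)) : ℝ) = (n : ℝ) + 1 by push_cast; ring] at this
  have hS2 : ∀ n : ℕ, ‖sigmaC w2 (l.toNat + (n + 1))‖
      ≤ ((l.toNat : ℝ) + 1) ^ (K2 + 1) * ((n : ℝ) + 1) ^ (K2 + 1) := by
    intro n
    refine le_trans (sigmaC_norm_le w2 K2 hw2K (l.toNat + (n + 1))) ?_
    rw [← mul_pow]
    refine pow_le_pow_left₀ (Nat.cast_nonneg _) ?_ _
    push_cast
    nlinarith [Nat.cast_nonneg (α := ℝ) l.toNat, Nat.cast_nonneg (α := ℝ) n]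
  have hNpow : ∀ (m : ℤ) (n : ℕ), ‖((n + 1 : ℕ) : ℂ) ^ (-m)‖ ≤ ((n : ℝ) + 1) ^ m.natAbs := by
    intro m n
    rw [norm_zpow, Complex.norm_natCast,
      show (((n + 1 : ℕ)) : ℝ) = (n : ℝ) + 1 by push_cast; ring]
    have h1 : ((n : ℝ) + 1) ^ (-m) ≤ ((n : ℝ) + 1) ^ ((m.natAbs : ℤ)) := by
      refine zpow_le_zpow_right₀ (by nlinarith [Nat.cast_nonneg (α := ℝ) n]) ?_
      refine le_trans (neg_le_abs m) (le_of_eq (Int.abs_eq_natAbs m))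
    rwa [zpow_natCast] at h1
  have h4πNnorm : ∀ n : ℕ, ‖4 * (π : ℂ) * ((n + 1 : ℕ) : ℂ)‖ = 4 * π * ((n : ℝ) + 1) := by
    intro n
    rw [show 4 * (π : ℂ) * ((n + 1 : ℕ) : ℂ) = (((4 * π * ((n : ℝ) + 1) : ℝ)) : ℂ) by
      push_cast; ring, Complex.norm_real, Real.norm_eq_abs, _root_.abs_of_nonneg (by positivity)]
  have h4πN : ∀ (n : ℕ) (j : ℤ), ‖(4 * (π : ℂ) * ((n + 1 : ℕ) : ℂ)) ^ (-j)‖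
      ≤ (4 * π) ^ (-j) * ((n : ℝ) + 1) ^ j.natAbs := by
    intro n j
    rw [norm_zpow, h4πNnorm n, mul_zpow]
    refine mul_le_mul_of_nonneg_left ?_ (zpow_nonneg (by positivity) _)
    have h1 : ((n : ℝ) + 1) ^ (-j) ≤ ((n : ℝ) + 1) ^ ((j.natAbs : ℤ)) := by
      refine zpow_le_zpow_right₀ (by nlinarith [Nat.cast_nonneg (α := ℝ) n]) ?_
      exact le_trans (neg_le_abs j) (le_of_eq (Int.abs_eq_natAbs j))
    rwa [zpow_natCast] at h1
  -- the coefficient bound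
  have hc : ∀ j : ℤ, ∀ n : ℕ,
      ‖sigmaC w1 (n + 1) * ((n + 1 : ℕ) : ℂ) ^ (-(s + r - a + b)) *
        sigmaC w2 (l.toNat + (n + 1)) * α j * (4 * (π : ℂ) * ((n + 1 : ℕ) : ℂ)) ^ (-j)‖
      ≤ D ‖α j‖ j * ((n : ℝ) + 1) ^ (Kn j) := by
    intro j n
    have hn1 : (0:ℝ) ≤ (n : ℝ) + 1 := by positivity
    rw [norm_mul, norm_mul, norm_mul, norm_mul]
    have b1 := hS1 n
    have b2 := hNpow (s + r - a + b) n
    have b3 := hS2 n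
    have b5 := h4πN n j
    have h12 : ‖sigmaC w1 (n + 1)‖ * ‖((n + 1 : ℕ) : ℂ) ^ (-(s + r - a + b))‖
        ≤ ((n : ℝ) + 1) ^ (K1 + 1) * ((n : ℝ) + 1) ^ (s + r - a + b).natAbs :=
      mul_le_mul b1 b2 (norm_nonneg _) (by positivity)
    have h123 : ‖sigmaC w1 (n + 1)‖ * ‖((n + 1 : ℕ) : ℂ) ^ (-(s + r - a + b))‖ *
        ‖sigmaC w2 (l.toNat + (n + 1))‖
        ≤ ((n : ℝ) + 1) ^ (K1 + 1) * ((n : ℝ) + 1) ^ (s + r - a + b).natAbs *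
          (((l.toNat : ℝ) + 1) ^ (K2 + 1) * ((n : ℝ) + 1) ^ (K2 + 1)) :=
      mul_le_mul h12 b3 (norm_nonneg _) (by positivity)
    have h1234 := mul_le_mul h123 (le_refl ‖α j‖) (norm_nonneg _)
      (by positivity)
    have h12345 := mul_le_mul h1234 b5 (norm_nonneg _)
      (by positivity)
    refine le_trans h12345 (le_of_eq ?_)
    rw [hD_def, hKn_def]
    simp only
    rw [pow_add, pow_add, pow_add]
    ring
  have hDnonneg : ∀ j : ℤ, 0 ≤ D ‖α j‖ j := by
    intro j
    rw [hD_def]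
    exact mul_nonneg (mul_nonneg (by positivity) (norm_nonneg _)) (zpow_nonneg (by positivity) _)
  -- instantiate the core theorem
  have hcore := core J
    (fun n j => sigmaC w1 (n + 1) * ((n + 1 : ℕ) : ℂ) ^ (-(s + r - a + b)) *
      sigmaC w2 (l.toNat + (n + 1)) * α j * (4 * (π : ℂ) * ((n + 1 : ℕ) : ℂ)) ^ (-j))
    (fun j => (((b + a - j - 1 : ℤ) : ℂ)) + t)
    (fun n => 4 * π * ((n : ℝ) + 1 + (l : ℝ)))
    hBpos hCpos
    (by -- hsum1
      intro j hj
      have hx : (Kn j : ℝ) + 2 ≤ ((((b + a - j - 1 : ℤ) : ℂ)) + t).re := by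
        rw [hCre j]; exact hxj j hj
      have key := key_summable (hDnonneg j) (Kn j) _ (hc j) (by linarith : (0:ℝ) ≤ (l : ℝ)) hx
      refine (key.mul_left ((4 * π) ^ (-(((((b + a - j - 1 : ℤ) : ℂ)) + t).re)))).congr
        fun n => ?_
      have hr := Real.mul_rpow (show (0:ℝ) ≤ 4 * π by positivity)
        (show (0:ℝ) ≤ (n : ℝ) + 1 + (l : ℝ) by nlinarith [Nat.cast_nonneg (α := ℝ) n])
        (z := -(((((b + a - j - 1 : ℤ) : ℂ)) + t).re))
      simp only [hr]
      ring
    )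
    (by -- hsum2
      intro y hy j hj
      have hρ0 : (0:ℝ) ≤ Real.exp (-(4 * π * y)) := (Real.exp_pos _).le
      have hρ1 : Real.exp (-(4 * π * y)) < 1 := by
        rw [Real.exp_lt_one_iff]
        nlinarith
      refine Summable.of_nonneg_of_le (fun n => by positivity) (fun n => ?_)
        (key_summable_exp (D := D ‖α j‖ j) (Kn j) hρ0 hρ1)
      have hexple : Real.exp (-(4 * π * ((n : ℝ) + 1 + (l : ℝ)) * y))
          ≤ Real.exp (-(4 * π * y)) ^ (n + 1) := by
        rw [show Real.exp (-(4 * π * y)) ^ (n + 1)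
            = Real.exp (((n + 1 : ℕ) : ℝ) * (-(4 * π * y))) by
          rw [Real.exp_nat_mul]]
        refine Real.exp_le_exp.mpr ?_
        push_cast
        nlinarith [mul_nonneg (mul_nonneg hπ.le hy.le) (show (0:ℝ) ≤ (l:ℝ) by linarith),
          mul_nonneg (mul_nonneg hπ.le hy.le) (Nat.cast_nonneg (α := ℝ) n)]
      exact mul_le_mul (hc j n) hexple (Real.exp_pos _).le
        (mul_nonneg (hDnonneg j) (by positivity))
    )
  obtain ⟨hcA, hcA', hcB, hcC⟩ := hcore
  -- pointwise identification of the statement's summand with the core form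
  have claimA : ∀ (n : ℕ) (y : ℝ), 0 < y →
      sigmaC w1 (n + 1) * ((n + 1 : ℕ) : ℂ) ^ (-(s + r - a + b)) *
        sigmaC w2 (l.toNat + (n + 1)) *
        (∑ j ∈ J, α j * (4 * (π : ℂ) * ((n + 1 : ℕ) : ℂ) * (y : ℂ)) ^ (-j)) *
        Complex.exp (-4 * (π : ℂ) * ((l : ℂ) + ((n + 1 : ℕ) : ℂ)) * (y : ℂ)) *
        (y : ℂ) ^ (a - r - b) * (y : ℂ) ^ (t + ((b + b : ℤ) : ℂ) + (r : ℂ) - 2)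
      = ∑ j ∈ J,
          (sigmaC w1 (n + 1) * ((n + 1 : ℕ) : ℂ) ^ (-(s + r - a + b)) *
            sigmaC w2 (l.toNat + (n + 1)) * α j * (4 * (π : ℂ) * ((n + 1 : ℕ) : ℂ)) ^ (-j)) *
          ((y : ℂ) ^ ((((b + a - j - 1 : ℤ) : ℂ)) + t - 1) *
            Complex.exp (-(↑(4 * π * ((n : ℝ) + 1 + (l : ℝ))) * (y : ℂ)))) := by
    intro n y hy
    have hy0 : (y : ℂ) ≠ 0 := Complex.ofReal_ne_zero.mpr hy.ne'
    have hexp : Complex.exp (-4 * (π : ℂ) * ((l : ℂ) + ((n + 1 : ℕ) : ℂ)) * (y : ℂ))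
        = Complex.exp (-(↑(4 * π * ((n : ℝ) + 1 + (l : ℝ))) * (y : ℂ))) := by
      congr 1
      push_cast
      ring
    rw [hexp]
    rw [Finset.mul_sum]
    simp only [Finset.sum_mul]
    refine Finset.sum_congr rfl fun j hj => ?_
    exact pointwiseA
      (sigmaC w1 (n + 1) * ((n + 1 : ℕ) : ℂ) ^ (-(s + r - a + b)) * sigmaC w2 (l.toNat + (n + 1)))
      (α j) (Complex.exp (-(↑(4 * π * ((n : ℝ) + 1 + (l : ℝ))) * (y : ℂ)))) hy0
      (4 * (π : ℂ) * ((n + 1 : ℕ) : ℂ)) j (a - r - b)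
      (t + ((b + b : ℤ) : ℂ) + (r : ℂ) - 2) ((((b + a - j - 1 : ℤ) : ℂ)) + t)
      (by push_cast; ring)
  refine ⟨?_, ?_, ?_, ?_⟩
  · -- Part 1
    intro y hy
    exact (summable_congr fun n => claimA n y hy).mpr (hcA y hy)
  · -- Part 2
    refine IntegrableOn.congr_fun hcB (fun y hy => ?_) measurableSet_Ioi
    exact tsum_congr fun n => (claimA n y hy).symm
  · -- Part 3
    intro j hj
    have hx : (Kn j : ℝ) + 2 ≤ ((((b + a - j - 1 : ℤ) : ℂ)) + t).re := by
      rw [hCre j]; exact hxj j hj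
    have hc2 : ∀ n : ℕ,
        ‖sigmaC w1 (n + 1) * sigmaC w2 (l.toNat + (n + 1)) *
          ((n + 1 : ℕ) : ℂ) ^ (-(s + r - a + b + j))‖
        ≤ ((l.toNat : ℝ) + 1) ^ (K2 + 1) * ((n : ℝ) + 1) ^ (Kn j) := by
      intro n
      rw [norm_mul, norm_mul]
      have b1 := hS1 n
      have b3 := hS2 n
      have b2' : ‖((n + 1 : ℕ) : ℂ) ^ (-(s + r - a + b + j))‖
          ≤ ((n : ℝ) + 1) ^ ((s + r - a + b).natAbs + j.natAbs) := by
        refine le_trans (hNpow (s + r - a + b + j) n) ?_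
        refine pow_le_pow_right₀ (by nlinarith [Nat.cast_nonneg (α := ℝ) n]) ?_
        exact le_trans (Int.natAbs_add_le _ _) (le_refl _)
      have h12 := mul_le_mul b1 b3 (norm_nonneg _) (by positivity)
      have h123 := mul_le_mul h12 b2' (norm_nonneg _) (by positivity)
      refine le_trans h123 (le_of_eq ?_)
      rw [hKn_def]
      simp only
      rw [pow_add, pow_add, pow_add]
      ring
    have key := key_summable (D := ((l.toNat : ℝ) + 1) ^ (K2 + 1)) (by positivity) (Kn j)
      _ hc2 (by linarith : (0:ℝ) ≤ (l : ℝ)) hx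
    refine Summable.of_norm (key.congr fun n => ?_)
    -- show : ‖c2 n‖ * ((n+1)+l)^(-x) = ‖term n‖
    have hNLpos : (0:ℝ) < (n : ℝ) + 1 + (l : ℝ) := by nlinarith [Nat.cast_nonneg (α := ℝ) n]
    have hNL : (((n + 1 : ℕ) : ℂ) + (l : ℂ)) = ((((n : ℝ) + 1 + (l : ℝ)) : ℝ) : ℂ) := by
      push_cast; ring
    have hZ2 : ‖(((n + 1 : ℕ) : ℂ) + (l : ℂ)) ^ ((((b + a - j - 1 : ℤ) : ℂ)) + t)‖
        = ((n : ℝ) + 1 + (l : ℝ)) ^ (((((b + a - j - 1 : ℤ) : ℂ)) + t).re) := by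
      rw [hNL, Complex.norm_cpow_eq_rpow_re_of_pos hNLpos]
    have hZ1 : ‖((n + 1 : ℕ) : ℂ) ^ (s + r - a + b + j)‖ = ((n : ℝ) + 1) ^ (s + r - a + b + j) := by
      rw [norm_zpow, Complex.norm_natCast,
        show (((n + 1 : ℕ)) : ℝ) = (n : ℝ) + 1 by push_cast; ring]
    have e1 : ‖sigmaC w1 (n + 1) * sigmaC w2 (l.toNat + (n + 1)) *
        ((n + 1 : ℕ) : ℂ) ^ (-(s + r - a + b + j))‖
        = ‖sigmaC w1 (n + 1) * sigmaC w2 (l.toNat + (n + 1))‖ *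
          (((n : ℝ) + 1) ^ (s + r - a + b + j))⁻¹ := by
      rw [norm_mul (sigmaC w1 (n + 1) * sigmaC w2 (l.toNat + (n + 1))) _, norm_zpow,
        Complex.norm_natCast, show (((n + 1 : ℕ)) : ℝ) = (n : ℝ) + 1 by push_cast; ring,
        zpow_neg]
    have e2 : ‖sigmaC w1 (n + 1) * sigmaC w2 (l.toNat + (n + 1)) /
        (((n + 1 : ℕ) : ℂ) ^ (s + r - a + b + j) *
          (((n + 1 : ℕ) : ℂ) + (l : ℂ)) ^ ((((b + a - j - 1 : ℤ) : ℂ)) + t))‖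
        = ‖sigmaC w1 (n + 1) * sigmaC w2 (l.toNat + (n + 1))‖ /
          (((n : ℝ) + 1) ^ (s + r - a + b + j) *
            ((n : ℝ) + 1 + (l : ℝ)) ^ (((((b + a - j - 1 : ℤ) : ℂ)) + t).re)) := by
      rw [norm_div, norm_mul (((n + 1 : ℕ) : ℂ) ^ (s + r - a + b + j)) _, hZ1, hZ2]
    rw [e1, e2, Real.rpow_neg (by linarith : (0:ℝ) ≤ (n : ℝ) + 1 + (l : ℝ)),
      div_eq_mul_inv, mul_inv]
    ring
  · -- Part 4
    rw [setIntegral_congr_fun measurableSet_Ioi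
      (fun y (hy : 0 < y) => tsum_congr fun n => claimA n y hy), hcC]
    refine Finset.sum_congr rfl fun j hj => ?_
    have hπC : (4 * (π : ℂ)) ≠ 0 := by
      simp only [Ne, mul_eq_zero, not_or]
      constructor
      · norm_num
      · exact Complex.ofReal_ne_zero.mpr hπ.ne'
    have hc0 : (4 * (π : ℂ)) ^ (-j) * (4 * (π : ℂ)) ^ (-((((b + a - j - 1 : ℤ) : ℂ)) + t))
        = (4 * (π : ℂ)) ^ (((1 - b - a : ℤ) : ℂ) - t) := by
      rw [← Complex.cpow_intCast (4 * (π : ℂ)) (-j), ← Complex.cpow_add _ _ hπC]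
      congr 1
      push_cast
      ring
    have hterm : ∀ n : ℕ,
        (sigmaC w1 (n + 1) * ((n + 1 : ℕ) : ℂ) ^ (-(s + r - a + b)) *
          sigmaC w2 (l.toNat + (n + 1)) * α j * (4 * (π : ℂ) * ((n + 1 : ℕ) : ℂ)) ^ (-j)) *
          (((4 * π * ((n : ℝ) + 1 + (l : ℝ)) : ℝ) : ℂ) ^ (-((((b + a - j - 1 : ℤ) : ℂ)) + t)) *
            Complex.Gamma ((((b + a - j - 1 : ℤ) : ℂ)) + t))
        = (α j * (4 * (π : ℂ)) ^ (((1 - b - a : ℤ) : ℂ) - t) *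
            Complex.Gamma ((((b + a - j - 1 : ℤ) : ℂ)) + t)) *
          (sigmaC w1 (n + 1) * sigmaC w2 (l.toNat + (n + 1)) /
            (((n + 1 : ℕ) : ℂ) ^ (s + r - a + b + j) *
              (((n + 1 : ℕ) : ℂ) + (l : ℂ)) ^ ((((b + a - j - 1 : ℤ) : ℂ)) + t))) := by
      intro n
      have hN0 : ((n + 1 : ℕ) : ℂ) ≠ 0 := Nat.cast_ne_zero.mpr (by omega)
      have hBsplit : (((4 * π * ((n : ℝ) + 1 + (l : ℝ)) : ℝ) : ℂ))
            ^ (-((((b + a - j - 1 : ℤ) : ℂ)) + t))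
          = (4 * (π : ℂ)) ^ (-((((b + a - j - 1 : ℤ) : ℂ)) + t)) *
            (((n + 1 : ℕ) : ℂ) + (l : ℂ)) ^ (-((((b + a - j - 1 : ℤ) : ℂ)) + t)) := by
        rw [show ((4 * π * ((n : ℝ) + 1 + (l : ℝ)) : ℝ)) = (4 * π) * ((n : ℝ) + 1 + (l : ℝ))
            by ring,
          Complex.ofReal_mul, mul_cpow_ofReal_nonneg (by positivity)
            (by nlinarith [Nat.cast_nonneg (α := ℝ) n])]
        congr 2
        · push_cast; ring
        · push_cast; ring
      rw [hBsplit]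
      have := pointwiseB (N := ((n + 1 : ℕ) : ℂ)) (P4 := 4 * (π : ℂ)) hN0
        (((n + 1 : ℕ) : ℂ) + (l : ℂ)) (sigmaC w1 (n + 1)) (sigmaC w2 (l.toNat + (n + 1)))
        (α j) (Complex.Gamma ((((b + a - j - 1 : ℤ) : ℂ)) + t))
        ((((b + a - j - 1 : ℤ) : ℂ)) + t) (((1 - b - a : ℤ) : ℂ) - t)
        (s + r - a + b) j hc0
      exact this
    rw [tsum_congr hterm, tsum_mul_left]

end
end

section
/- Let k, r, l be integers with r ≥ 1 and l ≥ 1. Then there exists S₀ ∈ ℝ such that for all s ∈ ℂ with Re(s) > S₀, all series below converge absolutely and D_l(k+r−2, −r−2; s) = ζ(3+r) · Σ_{m=1}^∞ m^{−3−r} Σ_{x mod m, gcd(x,m)=1} e^{−2πixl/m} · E_l(s, k+r−2; x/m), where the inner sum runs over residues x modulo m coprime to m and ζ is the Riemann zeta function. -/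
open Complex
open scoped Real

noncomputable section

/-- The `n`-th term (indexed so that `n : ℕ` corresponds to the summation index `n + h + 1`)
of the shifted convolution series `D_h(α, β; s) = Σ_{n > h} σ_α(n) σ_β(n-h) n^{-s}`. -/
def DshiftTerm (h : ℕ) (α β s : ℂ) (n : ℕ) : ℂ :=
  sigmaC α (n + h + 1) * sigmaC β (n + 1) / ((n + h + 1 : ℕ) : ℂ) ^ s

/-- The shifted convolution series `D_h(α, β; s) = Σ_{n > h} σ_α(n) σ_β(n-h) n^{-s}`. -/
def Dshift (h : ℕ) (α β s : ℂ) : ℂ := ∑' n : ℕ, DshiftTerm h α β s n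

/-- The `n`-th term (the summation index being `n + l + 1`) of the truncated Estermann zeta
function `E_l(s, α; x/m) = Σ_{n > l} σ_α(n) e^{2πixn/m} n^{-s}`. -/
def estermannTerm (l : ℕ) (s α : ℂ) (x : ℕ) (m : ℕ) (n : ℕ) : ℂ :=
  sigmaC α (n + l + 1) * Complex.exp (2 * (π : ℂ) * I * x * ((n + l + 1 : ℕ) : ℂ) / m) /
    ((n + l + 1 : ℕ) : ℂ) ^ s

/-- The truncated Estermann zeta function `E_l(s, α; x/m) = Σ_{n > l} σ_α(n) e^{2πixn/m} n^{-s}`. -/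
def estermann (l : ℕ) (s α : ℂ) (x : ℕ) (m : ℕ) : ℂ := ∑' n : ℕ, estermannTerm l s α x m n

/-!
Since `Σ_{d ∣ m} c_d(q) = m · [m ∣ q]` for the Ramanujan sums `c_m(q)`, the Dirichlet convolution
of `1` with `m ↦ c_m(q)` has L-series `σ_{1-s}(q)`, which gives the Ramanujan expansion
`σ_{-r-2}(q) = ζ(3+r) Σ_{m ≥ 1} c_m(q) m^{-3-r}`. Substituting it for `σ_{-r-2}(n - l)` in `D_l`
produces a double series that converges absolutely for `Re s` large, because `|c_m(q)| ≤ m`;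
interchanging the sums and writing `e(x(n - l)/m) = e(-xl/m) e(xn/m)` inside `c_m(n - l)` turns the
inner series into the Estermann functions `E_l(s, k+r-2; x/m)`.
-/

def ramanujanSum (m q : ℕ) : ℂ :=
  ∑ x ∈ (Finset.range m).filter (fun x => Nat.gcd x m = 1), Complex.exp (2 * π * I * x * q / m)

lemma norm_exp_two_pi_I_mul_div (x q m : ℕ) : ‖Complex.exp (2 * π * I * x * q / m)‖ = 1 := by
  rw [Complex.norm_exp]; simp

lemma sum_range_exp_eq_ite {m : ℕ} (hm : m ≠ 0) (q : ℕ) :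
    ∑ y ∈ Finset.range m, Complex.exp (2 * π * I * y * q / m) = if m ∣ q then (m : ℂ) else 0 := by
  set ζ := Complex.exp (2 * π * I / m) ^ q
  have hζ : IsPrimitiveRoot (Complex.exp (2 * π * I / m)) m := Complex.isPrimitiveRoot_exp m hm
  have hterm : ∀ y : ℕ, Complex.exp (2 * π * I * y * q / m) = ζ ^ y := fun y => by
    rw [← pow_mul, ← Complex.exp_nat_mul]; congr 1; push_cast; ring
  simp_rw [hterm]
  split_ifs with hdvd
  · simp [ζ, (hζ.pow_eq_one_iff_dvd q).mpr hdvd]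
  · have hζ1 : ζ ≠ 1 := fun h => hdvd ((hζ.pow_eq_one_iff_dvd q).mp h)
    have hζm : ζ ^ m = 1 := by rw [pow_right_comm, hζ.pow_eq_one, one_pow]
    rw [geom_sum_eq hζ1, hζm, sub_self, zero_div]

/-- The residues `y` mod `m` with `gcd(m, y) = g` are the `g * x` with `x` a reduced residue
mod `m / g`. -/
lemma ramanujanSum_div_eq_sum_gcd_eq {m g : ℕ} (hg : g ∈ m.divisors) (q : ℕ) :
    ramanujanSum (m / g) q =
      ∑ y ∈ (Finset.range m).filter (fun y => Nat.gcd m y = g),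
        Complex.exp (2 * π * I * y * q / m) := by
  obtain ⟨hgm, hm⟩ := Nat.mem_divisors.mp hg
  have hg0 : 0 < g := Nat.pos_of_mem_divisors hg
  have hmg : g * (m / g) = m := Nat.mul_div_cancel' hgm
  refine Finset.sum_nbij' (fun x => g * x) (fun y => y / g) ?_ ?_ ?_ ?_ ?_
  · intro x hx
    rw [Finset.mem_filter, Finset.mem_range] at hx ⊢
    refine ⟨hmg ▸ (Nat.mul_lt_mul_left hg0).mpr hx.1, ?_⟩
    rw [← hmg, Nat.gcd_mul_left, Nat.gcd_comm, hx.2, mul_one]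
  · intro y hy
    rw [Finset.mem_filter, Finset.mem_range] at hy ⊢
    refine ⟨Nat.div_lt_div_of_lt_of_dvd hgm hy.1, ?_⟩
    have := Nat.coprime_div_gcd_div_gcd (m := m) (n := y) (hy.2 ▸ hg0)
    rw [hy.2] at this
    exact this.symm
  · intro x _
    exact Nat.mul_div_cancel_left x hg0
  · intro y hy
    exact Nat.mul_div_cancel' ((Finset.mem_filter.mp hy).2 ▸ Nat.gcd_dvd_right m y)
  · intro x _
    have hg0' : (g : ℂ) ≠ 0 := by exact_mod_cast hg0.ne'
    rw [show (m : ℂ) = g * (m / g : ℕ) by exact_mod_cast hmg.symm]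
    congr 1
    push_cast
    field_simp

lemma sum_divisors_ramanujanSum {m : ℕ} (hm : m ≠ 0) (q : ℕ) :
    ∑ d ∈ m.divisors, ramanujanSum d q = if m ∣ q then (m : ℂ) else 0 := by
  rw [← Nat.sum_div_divisors, Finset.sum_congr rfl fun g hg => ramanujanSum_div_eq_sum_gcd_eq hg q,
    Finset.sum_fiberwise_of_maps_to fun y _ => Nat.mem_divisors.mpr ⟨Nat.gcd_dvd_left m y, hm⟩,
    sum_range_exp_eq_ite hm]

lemma norm_ramanujanSum_le (m q : ℕ) : ‖ramanujanSum m q‖ ≤ m := by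
  calc ‖ramanujanSum m q‖ ≤ ∑ _x ∈ (Finset.range m).filter (fun x => Nat.gcd x m = 1), (1 : ℝ) :=
        norm_sum_le_of_le _ fun x _ => (norm_exp_two_pi_I_mul_div x q m).le
    _ ≤ m := by
        rw [Finset.sum_const, nsmul_one]
        exact_mod_cast (Finset.card_filter_le _ _).trans (Finset.card_range m).le

lemma norm_sigmaC_le (w : ℂ) (n : ℕ) : ‖sigmaC w n‖ ≤ (n : ℝ) ^ (|w.re| + 1) := by
  rcases eq_or_ne n 0 with rfl | hn
  · rw [sigmaC, Nat.divisors_zero, Finset.sum_empty, norm_zero]; positivity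
  have hterm : ∀ d ∈ n.divisors, ‖(d : ℂ) ^ w‖ ≤ (n : ℝ) ^ |w.re| := fun d hd => by
    have hd0 := Nat.pos_of_mem_divisors hd
    rw [Complex.norm_natCast_cpow_of_pos hd0]
    calc (d : ℝ) ^ w.re ≤ (d : ℝ) ^ |w.re| :=
          Real.rpow_le_rpow_of_exponent_le (by exact_mod_cast hd0) (le_abs_self _)
      _ ≤ (n : ℝ) ^ |w.re| := by
          gcongr
          exact_mod_cast Nat.divisor_le hd
  calc ‖sigmaC w n‖ ≤ n.divisors.card * (n : ℝ) ^ |w.re| := by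
        simpa [sigmaC] using norm_sum_le_of_le _ hterm
    _ ≤ n * (n : ℝ) ^ |w.re| := by gcongr; exact_mod_cast Nat.card_divisors_le_self n
    _ = (n : ℝ) ^ (|w.re| + 1) := by rw [Real.rpow_add_one (by positivity)]; ring

lemma LSeriesSummable_sigmaC_mul {w s : ℂ} {u : ℕ → ℂ} {c : ℝ}
    (hu : ∀ n ≠ 0, ‖u n‖ ≤ (n : ℝ) ^ c) (hs : |w.re| + c + 2 < s.re) :
    LSeriesSummable (fun n => sigmaC w n * u n) s := by
  refine LSeriesSummable_of_le_const_mul_rpow hs ⟨1, fun n hn => ?_⟩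
  have hn0 : (0 : ℝ) < n := by exact_mod_cast Nat.pos_of_ne_zero hn
  calc ‖sigmaC w n * u n‖ ≤ (n : ℝ) ^ (|w.re| + 1) * (n : ℝ) ^ c := by
        rw [norm_mul]; gcongr
        exacts [norm_sigmaC_le w n, hu n hn]
    _ = 1 * (n : ℝ) ^ (|w.re| + c + 2 - 1) := by rw [← Real.rpow_add hn0]; ring_nf

lemma LSeriesSummable_ramanujanSum (q : ℕ) {s : ℂ} (hs : 2 < s.re) :
    LSeriesSummable (fun m => ramanujanSum m q) s :=
  LSeriesSummable_of_le_const_mul_rpow hs ⟨1, fun m _ => by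
    rw [one_mul, show (2 : ℝ) - 1 = 1 by norm_num, Real.rpow_one]
    exact norm_ramanujanSum_le m q⟩

open scoped LSeries.notation in
lemma LSeries_convolution_one_ramanujanSum {q : ℕ} (hq : q ≠ 0) (s : ℂ) :
    LSeries ((1 : ℕ → ℂ) ⍟ fun m => ramanujanSum m q) s = sigmaC (1 - s) q := by
  have hterm : ∀ n, LSeries.term ((1 : ℕ → ℂ) ⍟ fun m => ramanujanSum m q) s n =
      if n ∈ q.divisors then (n : ℂ) ^ (1 - s) else 0 := fun n => by
    rcases eq_or_ne n 0 with rfl | hn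
    · simp
    rw [LSeries.term_of_ne_zero hn, LSeries.convolution_def]
    simp only [Pi.one_apply, one_mul]
    rw [Nat.sum_divisorsAntidiagonal (f := fun _ j => ramanujanSum j q),
      Nat.sum_div_divisors n fun d => ramanujanSum d q, sum_divisors_ramanujanSum hn]
    simp only [Nat.mem_divisors, hq, ne_eq, not_false_eq_true, and_true]
    split_ifs
    · rw [Complex.cpow_sub _ _ (Nat.cast_ne_zero.mpr hn), Complex.cpow_one]
    · rw [zero_div]
  rw [LSeries, tsum_congr hterm, tsum_eq_sum (s := q.divisors) fun n hn => if_neg hn, sigmaC]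
  exact Finset.sum_congr rfl fun n hn => if_pos hn

lemma sigmaC_one_sub_eq_riemannZeta_mul {q : ℕ} (hq : q ≠ 0) {s : ℂ} (hs : 2 < s.re) :
    sigmaC (1 - s) q = riemannZeta s * LSeries (fun m => ramanujanSum m q) s := by
  have hs1 : 1 < s.re := by linarith
  rw [← LSeries_one_eq_riemannZeta hs1, ← LSeries_convolution' (LSeriesSummable_one_iff.mpr hs1)
    (LSeriesSummable_ramanujanSum q hs), LSeries_convolution_one_ramanujanSum hq]

section KernelFubini

variable {a f : ℕ → ℂ} {c : ℕ → ℕ → ℂ} {b : ℕ → ℝ}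

lemma summable_mul_kernel_mul (hc : ∀ m n, ‖c m n‖ ≤ b m)
    (hab : Summable fun m => b m * ‖a m‖) (hf : Summable fun n => ‖f n‖) :
    Summable fun p : ℕ × ℕ => a p.1 * c p.1 p.2 * f p.2 := by
  have hb : ∀ m, 0 ≤ b m * ‖a m‖ := fun m => by
    have := (norm_nonneg _).trans (hc m 0)
    positivity
  refine Summable.of_norm_bounded (hab.mul_of_nonneg hf hb fun n => norm_nonneg _) fun p => ?_
  rw [norm_mul, norm_mul, mul_comm ‖a _‖]
  gcongr
  exact hc _ _

lemma summable_mul_tsum_kernel_mul (hc : ∀ m n, ‖c m n‖ ≤ b m)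
    (hab : Summable fun m => b m * ‖a m‖) (hf : Summable fun n => ‖f n‖) :
    Summable fun m => a m * ∑' n, c m n * f n := by
  simpa only [mul_assoc, tsum_mul_left] using (summable_mul_kernel_mul hc hab hf).prod

lemma tsum_tsum_kernel_mul_comm (hc : ∀ m n, ‖c m n‖ ≤ b m)
    (hab : Summable fun m => b m * ‖a m‖) (hf : Summable fun n => ‖f n‖) :
    ∑' n, (∑' m, a m * c m n) * f n = ∑' m, a m * ∑' n, c m n * f n := by
  have h : Summable (Function.uncurry fun m n => a m * c m n * f n) :=
    summable_mul_kernel_mul hc hab hf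
  simp_rw [← tsum_mul_right, h.tsum_comm, ← tsum_mul_left, mul_assoc]

end KernelFubini

lemma summable_estermannTerm (l : ℕ) {s α : ℂ} (x m : ℕ) (hs : |α.re| + 2 < s.re) :
    Summable (estermannTerm l s α x m) := by
  have hL := LSeriesSummable_sigmaC_mul (w := α) (s := s) (c := 0)
    (u := fun n => Complex.exp (2 * π * I * x * n / m))
    (fun n _ => by rw [Real.rpow_zero, norm_exp_two_pi_I_mul_div]) (by linarith)
  refine ((summable_nat_add_iff (l + 1)).mpr hL).congr fun n => ?_
  rw [LSeries.term_of_ne_zero (by omega)]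
  rfl

lemma summable_norm_sigmaC_div_cpow (l : ℕ) {s α : ℂ} (hs : |α.re| + 2 < s.re) :
    Summable fun n => ‖sigmaC α (n + l + 1) / ((n + l + 1 : ℕ) : ℂ) ^ s‖ := by
  have hL := LSeriesSummable_sigmaC_mul (w := α) (s := s) (c := 0) (u := fun _ => 1)
    (fun n _ => by simp) (by linarith)
  refine ((summable_nat_add_iff (l + 1)).mpr hL.norm).congr fun n => ?_
  rw [LSeries.term_of_ne_zero (by omega), mul_one]
  rfl

lemma summable_DshiftTerm (h : ℕ) {α β s : ℂ} (hs : |α.re| + |β.re| + 3 < s.re) :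
    Summable (DshiftTerm h α β s) := by
  have hL := LSeriesSummable_sigmaC_mul (w := α) (s := s) (c := |β.re| + 1)
    (u := fun n => sigmaC β (n - h))
    (fun n _ => (norm_sigmaC_le β _).trans (by gcongr; exact_mod_cast Nat.sub_le n h))
    (by linarith)
  refine ((summable_nat_add_iff (h + 1)).mpr hL).congr fun n => ?_
  rw [LSeries.term_of_ne_zero (by omega), DshiftTerm, show n + (h + 1) - h = n + 1 by omega]
  rfl

lemma tsum_ramanujanSum_mul_eq_sum_estermann {l m : ℕ} {s α : ℂ}
    (hE : ∀ x, Summable (estermannTerm l s α x m)) :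
    ∑' n, ramanujanSum m (n + 1) * (sigmaC α (n + l + 1) / ((n + l + 1 : ℕ) : ℂ) ^ s) =
      ∑ x ∈ (Finset.range m).filter (fun x => Nat.gcd x m = 1),
        Complex.exp (-2 * π * I * x * l / m) * estermann l s α x m := by
  have hterm : ∀ n, ramanujanSum m (n + 1) * (sigmaC α (n + l + 1) / ((n + l + 1 : ℕ) : ℂ) ^ s) =
      ∑ x ∈ (Finset.range m).filter (fun x => Nat.gcd x m = 1),
        Complex.exp (-2 * π * I * x * l / m) * estermannTerm l s α x m n := fun n => by
    rw [ramanujanSum, Finset.sum_mul]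
    refine Finset.sum_congr rfl fun x _ => ?_
    have hexp : Complex.exp (2 * π * I * x * (n + 1 : ℕ) / m) = Complex.exp (-2 * π * I * x * l / m)
        * Complex.exp (2 * π * I * x * (n + l + 1 : ℕ) / m) := by
      rw [← Complex.exp_add]
      push_cast
      ring_nf
    rw [estermannTerm, hexp]
    ring
  rw [tsum_congr hterm, Summable.tsum_finsetSum fun x _ => (hE x).mul_left _]
  exact Finset.sum_congr rfl fun x _ => tsum_mul_left

lemma sigmaC_neg_sub_two_eq (r : ℕ) {q : ℕ} (hq : q ≠ 0) :
    sigmaC (-(r : ℂ) - 2) q = riemannZeta (3 + r) *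
      ∑' m : ℕ, ((m + 1 : ℕ) : ℂ) ^ (-3 - (r : ℤ)) * ramanujanSum (m + 1) q := by
  have hs : 2 < (3 + (r : ℂ)).re := by
    simp only [add_re, re_ofNat, natCast_re]
    linarith [(r.cast_nonneg : (0 : ℝ) ≤ r)]
  rw [show -(r : ℂ) - 2 = 1 - (3 + r) by ring, sigmaC_one_sub_eq_riemannZeta_mul hq hs, LSeries,
    (LSeriesSummable_ramanujanSum q hs).tsum_eq_zero_add, LSeries.term_zero, zero_add]
  congr 1
  refine tsum_congr fun m => ?_
  rw [LSeries.term_of_ne_zero m.succ_ne_zero, ← Complex.cpow_intCast]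
  push_cast
  rw [show -3 - (r : ℂ) = -(3 + r) by ring, Complex.cpow_neg, div_eq_inv_mul]

lemma summable_natCast_mul_norm_zpow (r : ℕ) :
    Summable fun m : ℕ => ((m + 1 : ℕ) : ℝ) * ‖((m + 1 : ℕ) : ℂ) ^ (-3 - (r : ℤ))‖ := by
  have h := (summable_nat_add_iff 1).mpr (Real.summable_nat_pow_inv.mpr (by omega : 1 < r + 2))
  refine h.congr fun m => ?_
  rw [show -3 - (r : ℤ) = -((r + 2 + 1 : ℕ) : ℤ) by push_cast; ring, zpow_neg, zpow_natCast,
    norm_inv, norm_pow, Complex.norm_natCast]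
  field_simp
  ring

theorem Dshift_eq_estermann_expansion_general (k : ℤ) (r l : ℕ) :
    ∃ S₀ : ℝ, ∀ s : ℂ, S₀ < s.re →
      Summable (DshiftTerm l ((k : ℂ) + r - 2) (-(r : ℂ) - 2) s) ∧
      (∀ m : ℕ, 1 ≤ m → ∀ x : ℕ, Summable (estermannTerm l s ((k : ℂ) + r - 2) x m)) ∧
      Summable (fun m : ℕ => ((m + 1 : ℕ) : ℂ) ^ (-3 - (r : ℤ)) *
        ∑ x ∈ (Finset.range (m + 1)).filter (fun x => Nat.gcd x (m + 1) = 1),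
          Complex.exp (-2 * (π : ℂ) * I * x * l / ((m + 1 : ℕ) : ℂ)) *
            estermann l s ((k : ℂ) + r - 2) x (m + 1)) ∧
      Dshift l ((k : ℂ) + r - 2) (-(r : ℂ) - 2) s =
        riemannZeta (3 + (r : ℂ)) * ∑' m : ℕ, ((m + 1 : ℕ) : ℂ) ^ (-3 - (r : ℤ)) *
          ∑ x ∈ (Finset.range (m + 1)).filter (fun x => Nat.gcd x (m + 1) = 1),
            Complex.exp (-2 * (π : ℂ) * I * x * l / ((m + 1 : ℕ) : ℂ)) *
              estermann l s ((k : ℂ) + r - 2) x (m + 1) := by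
  set α : ℂ := (k : ℂ) + r - 2
  -- the bound `|α.re| + |β.re| + 3` of `summable_DshiftTerm`, with `|β.re| = r + 2` for `β = -r - 2`
  refine ⟨|α.re| + r + 5, fun s hs => ?_⟩
  have hβ : |(-(r : ℂ) - 2).re| = r + 2 := by
    rw [show (-(r : ℂ) - 2).re = -(r + 2) by simp only [sub_re, neg_re, natCast_re, re_ofNat]; ring,
      abs_neg, abs_of_nonneg (by positivity)]
  have hsα : |α.re| + 2 < s.re := by linarith [(r.cast_nonneg : (0 : ℝ) ≤ r)]
  have hE : ∀ m x, Summable (estermannTerm l s α x m) := fun m x => summable_estermannTerm l x m hsα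
  have hc : ∀ m n, ‖ramanujanSum (m + 1) (n + 1)‖ ≤ ((m + 1 : ℕ) : ℝ) :=
    fun m n => norm_ramanujanSum_le _ _
  have hab := summable_natCast_mul_norm_zpow r
  have hf := summable_norm_sigmaC_div_cpow l hsα
  have hinner := fun m => tsum_ramanujanSum_mul_eq_sum_estermann (hE (m + 1))
  refine ⟨summable_DshiftTerm l (by linarith), fun m _ x => hE m x, ?_, ?_⟩
  · simpa only [hinner] using summable_mul_tsum_kernel_mul hc hab hf
  · calc Dshift l α (-(r : ℂ) - 2) s
        = ∑' n, riemannZeta (3 + r) * ((∑' m : ℕ, ((m + 1 : ℕ) : ℂ) ^ (-3 - (r : ℤ)) *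
            ramanujanSum (m + 1) (n + 1)) * (sigmaC α (n + l + 1) / ((n + l + 1 : ℕ) : ℂ) ^ s)) :=
          tsum_congr fun n => by rw [DshiftTerm, sigmaC_neg_sub_two_eq r n.succ_ne_zero]; ring
      _ = _ := by
          rw [tsum_mul_left, tsum_tsum_kernel_mul_comm hc hab hf]
          simp only [hinner]

/-- for `Re s` large enough,
`D_l(k+r-2, -r-2; s) = ζ(3+r) Σ_{m≥1} m^{-3-r} Σ_{x mod m, (x,m)=1} e^{-2πixl/m}
E_l(s, k+r-2; x/m)`, all series converging absolutely. -/
theorem Dshift_eq_estermann_expansion (k : ℤ) (r l : ℕ) (hr : 1 ≤ r) (hl : 1 ≤ l) :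
    ∃ S₀ : ℝ, ∀ s : ℂ, S₀ < s.re →
      Summable (DshiftTerm l ((k : ℂ) + r - 2) (-(r : ℂ) - 2) s) ∧
      (∀ m : ℕ, 1 ≤ m → ∀ x : ℕ, Summable (estermannTerm l s ((k : ℂ) + r - 2) x m)) ∧
      Summable (fun m : ℕ => ((m + 1 : ℕ) : ℂ) ^ (-3 - (r : ℤ)) *
        ∑ x ∈ (Finset.range (m + 1)).filter (fun x => Nat.gcd x (m + 1) = 1),
          Complex.exp (-2 * (π : ℂ) * I * x * l / ((m + 1 : ℕ) : ℂ)) *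
            estermann l s ((k : ℂ) + r - 2) x (m + 1)) ∧
      Dshift l ((k : ℂ) + r - 2) (-(r : ℂ) - 2) s =
        riemannZeta (3 + (r : ℂ)) * ∑' m : ℕ, ((m + 1 : ℕ) : ℂ) ^ (-3 - (r : ℤ)) *
          ∑ x ∈ (Finset.range (m + 1)).filter (fun x => Nat.gcd x (m + 1) = 1),
            Complex.exp (-2 * (π : ℂ) * I * x * l / ((m + 1 : ℕ) : ℂ)) *
              estermann l s ((k : ℂ) + r - 2) x (m + 1) :=
  Dshift_eq_estermann_expansion_general k r l

end
end

section
/- Let m ≥ 1 and x be integers, and let α, s ∈ ℂ with Re(s) > 1 and Re(s − α) > 1. Then the Estermann series Σ_{n≥1} σ_α(n) e^{2πixn/m} n^{−s} converges absolutely and equals m^{α−2s} · Σ_{u=1}^{m} Σ_{v=1}^{m} e^{2πixuv/m} · ζ(s−α, u/m) · ζ(s, v/m), where ζ(·,·) is the Hurwitz zeta function. -/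
open Complex HurwitzZeta
open scoped Real

noncomputable section

/-- The analytically continued Hurwitz zeta function `ζ(s, x)`, for a real parameter `x`
(viewed in `ℝ/ℤ`; for `0 < x ≤ 1` it continues `Σ_{n≥0} (n+x)^{-s}`). -/
def HZ (s : ℂ) (x : ℝ) : ℂ := hurwitzZeta (x : UnitAddCircle) s

/-! Since `σ_α = (· ^ α) ⍟ 1`, the Estermann series is the absolutely convergent double series
`Σ_{a,b ≥ 1} e(xab/m) a^{α-s} b^{-s}`, summed along the fibres of `(a, b) ↦ ab`. Its coefficient
depends only on `a` and `b` modulo `m`; splitting both variables into residue classes, the class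
`(u, v)` contributes `m^{α-s} ζ(s-α, u/m) · m^{-s} ζ(s, v/m)`. -/

open LSeries
open scoped LSeries.notation

theorem term_natCast_cpow (w s : ℂ) : term (fun n : ℕ ↦ (n : ℂ) ^ w) s = term 1 (s - w) := by
  ext n
  rcases eq_or_ne n 0 with rfl | hn
  · simp
  · rw [term_of_ne_zero hn, term_of_ne_zero hn, cpow_sub _ _ (Nat.cast_ne_zero.mpr hn)]
    simp [div_div_eq_mul_div]

theorem LSeriesHasSum.hasSum_nat_succ {f : ℕ → ℂ} {s a : ℂ} (h : LSeriesHasSum f s a) :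
    HasSum (fun n : ℕ ↦ f (n + 1) / ((n + 1 : ℕ) : ℂ) ^ s) a := by
  have h' := (hasSum_nat_add_iff' 1).mpr h
  rw [Finset.sum_range_one, term_zero, sub_zero] at h'
  exact h'.congr_fun fun n ↦ (term_of_ne_zero n.succ_ne_zero f s).symm

theorem LSeriesHasSum_mul_convolution {c f g : ℕ → ℂ} {s a : ℂ}
    (h : HasSum (fun p : ℕ × ℕ ↦ c (p.1 * p.2) * (term f s p.1 * term g s p.2)) a) :
    LSeriesHasSum (fun n ↦ c n * (f ⍟ g) n) s a := by
  refine (h.tsum_fiberwise (fun p ↦ p.1 * p.2)).congr_fun fun n ↦ ?_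
  have hterm : term (fun n ↦ c n * (f ⍟ g) n) s n = c n * term (f ⍟ g) s n := by
    rcases eq_or_ne n 0 with rfl | hn
    · simp
    · simp only [term_of_ne_zero hn, mul_div_assoc]
  rw [hterm, term_convolution', ← tsum_mul_left]
  exact tsum_congr fun p ↦ by rw [show p.1.1 * p.1.2 = n from p.2]

namespace ZMod

variable {N : ℕ} [NeZero N]

theorem sum_eq_sum_Icc {M : Type*} [AddCommMonoid M] (f : ZMod N → M) :
    ∑ j, f j = ∑ u ∈ Finset.Icc 1 N, f u := by
  refine (Finset.sum_nbij (fun u : ℕ ↦ (u : ZMod N)) (by simp) ?_ ?_ fun _ _ ↦ rfl).symm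
  · intro u hu v hv huv
    simp only [Finset.coe_Icc, Set.mem_Icc] at hu hv
    refine ((natCast_eq_natCast_iff u v N).mp huv).eq_of_abs_lt ?_
    rw [abs_sub_lt_iff]
    omega
  · intro j _
    refine ⟨(j - 1).val + 1, ?_, ?_⟩
    · simp only [Finset.coe_Icc, Set.mem_Icc]
      exact ⟨by omega, (j - 1).val_lt⟩
    · simp

theorem stdAddChar_intCast_mul_natCast (x : ℤ) (n : ℕ) :
    stdAddChar ((x : ZMod N) * (n : ZMod N)) = exp (2 * π * I * x * n / N) := by
  rw [show (x : ZMod N) * n = ((x * n : ℤ) : ZMod N) by push_cast; rfl, stdAddChar_coe]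
  push_cast
  congr 1
  ring

theorem LSeriesHasSum_single (u : ZMod N) {s : ℂ} (hs : 1 < s.re) :
    LSeriesHasSum (fun n ↦ (Pi.single u 1 : ZMod N → ℂ) n) s
      (N ^ (-s) * hurwitzZeta (toAddCircle u) s) := by
  have h := (LSeriesSummable_of_one_lt_re (Pi.single u 1) hs).LSeriesHasSum
  rwa [← LFunction_eq_LSeries _ hs, LFunction, Finset.sum_eq_single u (by simp_all) (by simp),
    Pi.single_eq_same, one_mul] at h

theorem hasSum_double_LSeries (Ψ : ZMod N → ZMod N → ℂ) {s t : ℂ} (hs : 1 < s.re)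
    (ht : 1 < t.re) :
    HasSum (fun p : ℕ × ℕ ↦ Ψ p.1 p.2 * (term 1 s p.1 * term 1 t p.2))
      (N ^ (-s) * N ^ (-t) * ∑ u, ∑ v,
        Ψ u v * hurwitzZeta (toAddCircle u) s * hurwitzZeta (toAddCircle v) t) := by
  -- `Ψ` is the combination `Σ Ψ u v • 1_u ⊗ 1_v` of indicators of pairs of residue classes.
  have hprod (u v : ZMod N) := (LSeriesHasSum_single u hs).mul (LSeriesHasSum_single v ht)
    (summable_mul_of_summable_norm (LSeriesHasSum_single u hs).summable.norm
      (LSeriesHasSum_single v ht).summable.norm)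
  have hsum : HasSum (fun p : ℕ × ℕ ↦ Ψ p.1 p.2 * (term 1 s p.1 * term 1 t p.2))
      (∑ u, ∑ v, Ψ u v * (N ^ (-s) * hurwitzZeta (toAddCircle u) s *
        (N ^ (-t) * hurwitzZeta (toAddCircle v) t))) := by
    refine (hasSum_sum fun u _ ↦ hasSum_sum fun v _ ↦ (hprod u v).mul_left (Ψ u v)).congr_fun
      fun ⟨a, b⟩ ↦ ?_
    dsimp only
    rcases eq_or_ne a 0 with rfl | ha
    · simp
    rcases eq_or_ne b 0 with rfl | hb
    · simp
    simp [term_of_ne_zero ha, term_of_ne_zero hb, Pi.single_apply, ite_div, mul_ite, ite_mul,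
      Finset.sum_ite_eq]
  convert hsum using 1
  simp only [Finset.mul_sum]
  refine Finset.sum_congr rfl fun u _ ↦ Finset.sum_congr rfl fun v _ ↦ ?_
  ring

end ZMod

theorem sigmaC_eq_convolution (w : ℂ) : sigmaC w = (fun n : ℕ ↦ (n : ℂ) ^ w) ⍟ 1 := by
  ext n
  simp only [convolution_def]
  rw [Nat.sum_divisorsAntidiagonal (fun a b ↦ (a : ℂ) ^ w * (1 : ℕ → ℂ) b)]
  simp [sigmaC]

theorem HZ_natCast_div (s : ℂ) (m u : ℕ) [NeZero m] :
    HZ s ((u : ℝ) / m) = hurwitzZeta (ZMod.toAddCircle (u : ZMod m)) s := by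
  rw [HZ, ZMod.toAddCircle_natCast]

/-- for `m ≥ 1`, `x ∈ ℤ`, and `Re s > 1`, `Re (s - α) > 1`, the Estermann
series converges absolutely and
`Σ_{n≥1} σ_α(n) e^{2πixn/m} n^{-s} = m^{α-2s} Σ_{u=1}^m Σ_{v=1}^m e^{2πixuv/m}
ζ(s-α, u/m) ζ(s, v/m)`. -/
theorem estermann_eq_hurwitz (m : ℕ) (hm : 1 ≤ m) (x : ℤ) (α s : ℂ)
    (hs : 1 < s.re) (hsα : 1 < (s - α).re) :
    Summable (fun n : ℕ =>
      sigmaC α (n + 1) * Complex.exp (2 * (π : ℂ) * I * x * ((n + 1 : ℕ) : ℂ) / m) /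
        ((n + 1 : ℕ) : ℂ) ^ s) ∧
    (∑' n : ℕ,
      sigmaC α (n + 1) * Complex.exp (2 * (π : ℂ) * I * x * ((n + 1 : ℕ) : ℂ) / m) /
        ((n + 1 : ℕ) : ℂ) ^ s) =
      (m : ℂ) ^ (α - 2 * s) * ∑ u ∈ Finset.Icc 1 m, ∑ v ∈ Finset.Icc 1 m,
        Complex.exp (2 * (π : ℂ) * I * x * u * v / m) *
          HZ (s - α) ((u : ℝ) / m) * HZ s ((v : ℝ) / m) := by
  have : NeZero m := ⟨by omega⟩
  let ψ (j : ZMod m) : ℂ := ZMod.stdAddChar ((x : ZMod m) * j)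
  have hL : LSeriesHasSum (fun n ↦ ψ n * sigmaC α n) s
      (m ^ (-(s - α)) * m ^ (-s) * ∑ u, ∑ v, ψ (u * v) *
        hurwitzZeta (ZMod.toAddCircle u) (s - α) * hurwitzZeta (ZMod.toAddCircle v) s) := by
    rw [sigmaC_eq_convolution]
    refine LSeriesHasSum_mul_convolution ?_
    rw [term_natCast_cpow]
    simpa only [Nat.cast_mul] using ZMod.hasSum_double_LSeries (fun u v ↦ ψ (u * v)) hsα hs
  have hsum := hL.hasSum_nat_succ
  simp only [ψ, ZMod.stdAddChar_intCast_mul_natCast, mul_comm (exp _)] at hsum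
  refine ⟨hsum.summable, hsum.tsum_eq.trans ?_⟩
  rw [← cpow_add _ _ (by exact_mod_cast (NeZero.ne m)), ZMod.sum_eq_sum_Icc]
  congr 1
  · congr 1
    ring
  refine Finset.sum_congr rfl fun u _ ↦ ?_
  rw [ZMod.sum_eq_sum_Icc]
  refine Finset.sum_congr rfl fun v _ ↦ ?_
  rw [← Nat.cast_mul, ZMod.stdAddChar_intCast_mul_natCast, HZ_natCast_div, HZ_natCast_div]
  push_cast
  ring_nf

end
end
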